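/- arXiv:2402.00713 — 10 statements merged into one kernel-verified Lean document; each statement's English description precedes it below -/
import Mathlib

section
/- Let (X_n) be a sequence of independent random variables on a common measurable space (Ω, F), each with finite variance under every P in a family of probability measures 𝒫. If lim_{m→∞} sup_{P∈𝒫} Σ_{k=m}^∞ Var_P(X_k) = 0, then the centered partial sums S_n = Σ_{i=1}^n (X_i − E_P X_i) form a 𝒫-uniform Cauchy sequence, i.e., for every ε > 0, lim_{m→∞} sup_{P∈𝒫} P( sup_{k,n ≥ m} |S_k − S_n| ≥ ε ) = 0. -/
open MeasureTheory ProbabilityTheory Finset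

/-! Fix `m` and write `Y i = X (m + 1 + i) - E_P X (m + 1 + i)`. If two centered partial sums
`S_k, S_n` with `k, n ≥ m` differ by at least `ε`, then one of `S_k - S_m`, `S_n - S_m`, which are
partial sums of `Y`, has absolute value at least `ε / 2`. The partial sums of `Y` form a martingale
for the natural filtration, so Doob's maximal inequality applied to their absolute values and
Cauchy–Schwarz give `P (max_{j ≤ N} |Y 0 + ⋯ + Y j| ≥ ε / 2) ≤ 2 √(∑_{k > m} Var_P X_k) / ε`,
uniformly in `N` and `P`; the hypothesis makes the right-hand side small for large `m`. -/

section

variable {Ω : Type*} {m0 : MeasurableSpace Ω} {μ : Measure Ω}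

theorem MeasureTheory.Martingale.submartingale_abs {ι : Type*} [Preorder ι]
    {ℱ : Filtration ι m0} {f : ι → Ω → ℝ} (hf : Martingale f ℱ μ) :
    Submartingale (fun i ω => |f i ω|) ℱ μ := by
  refine ⟨fun i => continuous_abs.comp_stronglyMeasurable (hf.stronglyAdapted i),
    fun i j hij => ?_, fun i => (hf.integrable i).abs⟩
  filter_upwards [hf.condExp_ae_eq hij, abs_condExp_ae_le_condExp_abs (m := ℱ i) (μ := μ) (f j)]
    with ω hω hle using hω ▸ hle

theorem integral_abs_le_sqrt_variance [IsProbabilityMeasure μ] {f : Ω → ℝ}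
    (hf : MemLp f 2 μ) (hf0 : μ[f] = 0) : ∫ ω, |f ω| ∂μ ≤ Real.sqrt (variance f μ) := by
  have h := variance_nonneg |f| μ
  rw [variance_eq_sub hf.abs] at h
  simp only [Pi.pow_apply, Pi.abs_apply, sq_abs] at h
  rw [variance_of_integral_eq_zero hf.aemeasurable hf0]
  exact Real.le_sqrt_of_sq_le (by linarith)

theorem measure_setOf_exists_le_of_forall_exists_le {p : ℕ → Ω → Prop} {c : ENNReal}
    (h : ∀ N, μ {ω | ∃ j ≤ N, p j ω} ≤ c) : μ {ω | ∃ j, p j ω} ≤ c := by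
  have hunion : {ω | ∃ j, p j ω} = ⋃ N, {ω | ∃ j ≤ N, p j ω} := by
    ext ω
    simp only [Set.mem_ofPred_eq, Set.mem_iUnion]
    exact ⟨fun ⟨j, hj⟩ => ⟨j, j, le_rfl, hj⟩, fun ⟨_, j, _, hj⟩ => ⟨j, hj⟩⟩
  have hmono : Monotone fun N => {ω | ∃ j ≤ N, p j ω} :=
    fun N N' hN ω ⟨j, hj, hp⟩ => ⟨j, hj.trans hN, hp⟩
  rw [hunion, hmono.measure_iUnion]
  exact iSup_le h

theorem sum_lt_of_tsum_ofReal_lt {f : ℕ → ℝ} (hf : ∀ k, 0 ≤ f k) {η : ℝ}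
    (h : ∑' k, ENNReal.ofReal (f k) < ENNReal.ofReal η) (s : Finset ℕ) :
    ∑ k ∈ s, f k < η := by
  refine (ENNReal.ofReal_lt_ofReal_iff_of_nonneg (sum_nonneg fun k _ => hf k)).1 ?_
  rw [ENNReal.ofReal_sum_of_nonneg fun k _ => hf k]
  exact (ENNReal.sum_le_tsum s).trans_lt h

theorem ProbabilityTheory.iIndepFun.martingale_sum_sub_integral {X : ℕ → Ω → ℝ}
    (hsm : ∀ n, StronglyMeasurable (X n)) (hindep : iIndepFun X μ)
    (hint : ∀ n, Integrable (X n) μ) :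
    Martingale (fun n ω => ∑ i ∈ range (n + 1), (X i ω - ∫ x, X i x ∂μ))
      (Filtration.natural X hsm) μ := by
  have := hindep.isProbabilityMeasure
  refine martingale_of_condExp_sub_eq_zero_nat (fun n => ?_)
    (fun n => integrable_finsetSum _ fun i _ => (hint i).sub (integrable_const _)) fun n => ?_
  · exact Finset.stronglyMeasurable_fun_sum _ fun i hi =>
      ((Filtration.stronglyAdapted_natural hsm i).mono
        ((Filtration.natural X hsm).mono (Nat.lt_succ_iff.1 (mem_range.1 hi)))).sub
        stronglyMeasurable_const
  · have hincr : (fun ω => ∑ i ∈ range (n + 1 + 1), (X i ω - ∫ x, X i x ∂μ)) -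
        (fun ω => ∑ i ∈ range (n + 1), (X i ω - ∫ x, X i x ∂μ)) =
          X (n + 1) - fun _ => ∫ x, X (n + 1) x ∂μ := by
      ext ω
      simp [sum_range_succ _ (n + 1)]
    rw [hincr]
    filter_upwards [condExp_sub (m := Filtration.natural X hsm n) (hint (n + 1))
      (integrable_const (∫ x, X (n + 1) x ∂μ)),
      hindep.condExp_natural_ae_eq_of_lt hsm n.lt_succ_self] with ω hsub hX
    rw [hsub, Pi.sub_apply, hX, condExp_const (Filtration.le _ n)]
    simp

theorem ProbabilityTheory.iIndepFun.variance_sum_sub_integral [IsProbabilityMeasure μ]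
    {X : ℕ → Ω → ℝ} (hmeas : ∀ n, Measurable (X n)) (hindep : iIndepFun X μ)
    (hL2 : ∀ n, MemLp (X n) 2 μ) (s : Finset ℕ) :
    variance (fun ω => ∑ i ∈ s, (X i ω - ∫ x, X i x ∂μ)) μ = ∑ i ∈ s, variance (X i) μ := by
  have hsum : (fun ω => ∑ i ∈ s, (X i ω - ∫ x, X i x ∂μ)) =
      ∑ i ∈ s, fun ω => X i ω - ∫ x, X i x ∂μ := by
    ext ω; simp
  rw [hsum, IndepFun.variance_sum (X := fun i ω => X i ω - ∫ x, X i x ∂μ)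
    (fun i _ => (hL2 i).sub (memLp_const _))
    fun i _ j _ hij => (hindep.indepFun hij).comp (measurable_id.sub_const _)
      (measurable_id.sub_const _)]
  exact sum_congr rfl fun i _ => variance_sub_const (hmeas i).aestronglyMeasurable _

theorem ProbabilityTheory.iIndepFun.measure_exists_le_abs_sum_sub_integral_le
    {X : ℕ → Ω → ℝ} (hmeas : ∀ n, Measurable (X n)) (hindep : iIndepFun X μ)
    (hL2 : ∀ n, MemLp (X n) 2 μ) (N : ℕ) {ε : ℝ} (hε : 0 < ε) :
    μ {ω | ∃ j ≤ N, ε ≤ |∑ i ∈ range (j + 1), (X i ω - ∫ x, X i x ∂μ)|}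
      ≤ ENNReal.ofReal (Real.sqrt (∑ i ∈ range (N + 1), variance (X i) μ) / ε) := by
  have := hindep.isProbabilityMeasure
  set S : ℕ → Ω → ℝ := fun n ω => ∑ i ∈ range (n + 1), (X i ω - ∫ x, X i x ∂μ)
  have hS : Martingale S _ μ := hindep.martingale_sum_sub_integral
    (fun n => (hmeas n).stronglyMeasurable) fun n => (hL2 n).integrable one_le_two
  have hSL2 : MemLp (S N) 2 μ := memLp_finsetSum _ fun i _ => (hL2 i).sub (memLp_const _)
  have hS0 : μ[S N] = 0 := by
    simp only [S]
    rw [integral_finsetSum (f := fun i ω => X i ω - ∫ x, X i x ∂μ) _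
      fun i _ => ((hL2 i).integrable one_le_two).sub (integrable_const _)]
    simp [integral_sub ((hL2 _).integrable one_le_two)]
  have hset : {ω | ∃ j ≤ N, ε ≤ |S j ω|} =
      {ω | (ε.toNNReal : ℝ) ≤ (range (N + 1)).sup' nonempty_range_add_one fun j => |S j ω|} := by
    ext ω
    simp [le_sup'_iff, le_of_lt hε]
  have hdoob := maximal_ineq hS.submartingale_abs (fun j ω => abs_nonneg _) (ε := ε.toNNReal) N
  rw [← hset] at hdoob
  have hint : ∫ ω in {ω | ∃ j ≤ N, ε ≤ |S j ω|}, |S N ω| ∂μ ≤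
      Real.sqrt (∑ i ∈ range (N + 1), variance (X i) μ) := by
    rw [← hindep.variance_sum_sub_integral hmeas hL2]
    exact (setIntegral_le_integral (hS.integrable N).abs (ae_of_all _ fun ω => abs_nonneg _)).trans
      (integral_abs_le_sqrt_variance hSL2 hS0)
  rw [ENNReal.ofReal_div_of_pos hε,
    ENNReal.le_div_iff_mul_le (Or.inl (by simpa using hε)) (by simp), mul_comm]
  exact hdoob.trans (ENNReal.ofReal_le_ofReal hint)

end

theorem sum_Icc_one_add_sub_sum_Icc_one {M : Type*} [AddCommGroup M] (f : ℕ → M) (m j : ℕ) :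
    ∑ i ∈ Icc 1 (m + 1 + j), f i - ∑ i ∈ Icc 1 m, f i = ∑ i ∈ range (j + 1), f (m + 1 + i) := by
  rw [sub_eq_iff_eq_add', ← Ico_add_one_right_eq_Icc, ← Ico_add_one_right_eq_Icc,
    ← sum_Ico_consecutive _ (by omega : 1 ≤ m + 1) (by omega : m + 1 ≤ m + 1 + j + 1),
    add_right_inj, sum_Ico_eq_sum_range, add_assoc (m + 1), Nat.add_sub_cancel_left]

theorem exists_half_le_abs_sub_of_le_abs_sub {s : ℕ → ℝ} {ε : ℝ} (hε : 0 < ε) {m k n : ℕ}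
    (hk : m ≤ k) (hn : m ≤ n) (h : ε ≤ |s k - s n|) : ∃ j, ε / 2 ≤ |s (m + 1 + j) - s m| := by
  have hsucc : ∀ l, m ≤ l → ε / 2 ≤ |s l - s m| → ∃ j, ε / 2 ≤ |s (m + 1 + j) - s m| := by
    intro l hl hsl
    obtain rfl | hlt := hl.eq_or_lt
    · simp only [sub_self, abs_zero] at hsl
      linarith
    · exact ⟨l - (m + 1), by rwa [show m + 1 + (l - (m + 1)) = l by omega]⟩
  have htri : |s k - s n| ≤ |s k - s m| + |s n - s m| := by
    rw [abs_sub_comm (s n)]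
    exact abs_sub_le _ _ _
  by_cases hks : ε / 2 ≤ |s k - s m|
  · exact hsucc k hk hks
  · exact hsucc n hn (by linarith)

theorem stmt1_general {Ω : Type*} [MeasurableSpace Ω] (Ps : Set (Measure Ω))
    (X : ℕ → Ω → ℝ) (hmeas : ∀ n, Measurable (X n))
    (hindep : ∀ P ∈ Ps, iIndepFun X P)
    (hL2 : ∀ P ∈ Ps, ∀ n, MemLp (X n) 2 P)
    (hvar : ∀ ε : ℝ, 0 < ε → ∃ M : ℕ, ∀ m ≥ M, ∀ P ∈ Ps,
      ∑' k : ℕ, ENNReal.ofReal (variance (X (m + k)) P) < ENNReal.ofReal ε) :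
    ∀ ε : ℝ, 0 < ε → ∀ δ : ℝ, 0 < δ → ∃ M : ℕ, ∀ m ≥ M, ∀ P ∈ Ps,
      P {ω | ∃ k ≥ m, ∃ n ≥ m, ε ≤
        |(∑ i ∈ Finset.Icc 1 k, (X i ω - ∫ x, X i x ∂P)) -
          (∑ i ∈ Finset.Icc 1 n, (X i ω - ∫ x, X i x ∂P))|} < ENNReal.ofReal δ := by
  intro ε hε δ hδ
  obtain ⟨M, hM⟩ := hvar ((ε * δ / 4) ^ 2) (by positivity)
  refine ⟨M, fun m hm P hP => ?_⟩
  set Y : ℕ → Ω → ℝ := fun i => X (m + 1 + i)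
  have hvarY (N : ℕ) : ∑ i ∈ range (N + 1), variance (Y i) P < (ε * δ / 4) ^ 2 :=
    sum_lt_of_tsum_ofReal_lt (fun _ => variance_nonneg _ _) (hM (m + 1) (by omega) P hP) _
  have hY : iIndepFun Y P := (hindep P hP).precomp (add_right_injective (m + 1))
  have hmaximal (N : ℕ) := hY.measure_exists_le_abs_sum_sub_integral_le (fun _ => hmeas _)
    (fun _ => hL2 P hP _) N (half_pos hε)
  have hcauchy : {ω | ∃ k ≥ m, ∃ n ≥ m, ε ≤
        |(∑ i ∈ Finset.Icc 1 k, (X i ω - ∫ x, X i x ∂P)) -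
          (∑ i ∈ Finset.Icc 1 n, (X i ω - ∫ x, X i x ∂P))|} ⊆
      {ω | ∃ j, ε / 2 ≤ |∑ i ∈ range (j + 1), (Y i ω - ∫ x, Y i x ∂P)|} := by
    rintro ω ⟨k, hk, n, hn, hkn⟩
    obtain ⟨j, hj⟩ := exists_half_le_abs_sub_of_le_abs_sub
      (s := fun k => ∑ i ∈ Icc 1 k, (X i ω - ∫ x, X i x ∂P)) hε hk hn hkn
    exact ⟨j, by rwa [sum_Icc_one_add_sub_sum_Icc_one] at hj⟩
  calc P _ ≤ P {ω | ∃ j, ε / 2 ≤ |∑ i ∈ range (j + 1), (Y i ω - ∫ x, Y i x ∂P)|} :=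
        measure_mono hcauchy
    _ ≤ ENNReal.ofReal (δ / 2) := by
        refine measure_setOf_exists_le_of_forall_exists_le fun N =>
          (hmaximal N).trans (ENNReal.ofReal_le_ofReal ?_)
        rw [div_le_iff₀ (half_pos hε)]
        calc Real.sqrt _ ≤ Real.sqrt ((ε * δ / 4) ^ 2) := Real.sqrt_le_sqrt (hvarY N).le
          _ = δ / 2 * (ε / 2) := by rw [Real.sqrt_sq (by positivity)]; ring
    _ < ENNReal.ofReal δ := (ENNReal.ofReal_lt_ofReal_iff hδ).2 (half_lt_self hδ)

/-- Distribution-uniform Khintchine–Kolmogorov convergence theorem: if the tails of the sums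
of variances vanish Ps-uniformly, the centered partial sums are Ps-uniformly Cauchy. -/
theorem stmt1 {Ω : Type*} [MeasurableSpace Ω] (Ps : Set (Measure Ω))
    (hPs : ∀ P ∈ Ps, IsProbabilityMeasure P)
    (X : ℕ → Ω → ℝ) (hmeas : ∀ n, Measurable (X n))
    (hindep : ∀ P ∈ Ps, iIndepFun X P)
    (hL2 : ∀ P ∈ Ps, ∀ n, MemLp (X n) 2 P)
    (hvar : ∀ ε : ℝ, 0 < ε → ∃ M : ℕ, ∀ m ≥ M, ∀ P ∈ Ps,
      ∑' k : ℕ, ENNReal.ofReal (variance (X (m + k)) P) < ENNReal.ofReal ε) :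
    ∀ ε : ℝ, 0 < ε → ∀ δ : ℝ, 0 < δ → ∃ M : ℕ, ∀ m ≥ M, ∀ P ∈ Ps,
      P {ω | ∃ k ≥ m, ∃ n ≥ m, ε ≤
        |(∑ i ∈ Finset.Icc 1 k, (X i ω - ∫ x, X i x ∂P)) -
          (∑ i ∈ Finset.Icc 1 n, (X i ω - ∫ x, X i x ∂P))|} < ENNReal.ofReal δ :=
  stmt1_general Ps X hmeas hindep hL2 hvar
end

section
/- Let (Z_n) be random variables that are independent under each P in a family 𝒫. Define Z_{n,B}^{≤1} := (Z_n/B)·1{|Z_n/B| ≤ 1}. Suppose: lim_{B→∞} sup_{P∈𝒫} Σ_{n=1}^∞ |E_P Z_{n,B}^{≤1}| = 0, lim_{B→∞} sup_{P∈𝒫} Σ_{n=1}^∞ Var_P Z_{n,B}^{≤1} = 0, and lim_{B→∞} sup_{P∈𝒫} Σ_{n=1}^∞ P(|Z_n| > B) = 0. Then the partial sums S_n = Σ_{k=1}^n Z_k are 𝒫-uniformly stochastically nonincreasing: for every δ > 0 there exists B_δ > 0 such that sup_{P∈𝒫} P(|S_n| ≥ B_δ) < δ for all n ≥ 1. -/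
open MeasureTheory ProbabilityTheory Filter

/-!
Fix a scale `B` at which the three series are small. Off the event that some `|Z k| > B`
(whose probability is at most the third series), the sum `S_n` equals `B` times the sum `T` of
the truncated variables `truncScaled B (Z k)`, so `|S_n| ≥ B` forces `|T| ≥ 1`. Since the
means of the truncated variables sum to at most `1/2`, this puts `T` at distance `≥ 1/2` from its
mean, and Chebyshev's inequality with the additivity of variances under independence bounds that
probability by four times the second series.
-/

/-- `truncScaled B (Z n ω)` is the paper's `Z_{n,B}^{≤1}`. -/
noncomputable def truncScaled (B x : ℝ) : ℝ := if |x / B| ≤ 1 then x / B else 0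

section truncScaled

variable {Ω : Type*} [MeasurableSpace Ω]

lemma measurable_truncScaled (B : ℝ) : Measurable (truncScaled B) :=
  Measurable.ite (measurableSet_le (measurable_id.div_const B).abs measurable_const)
    (measurable_id.div_const B) measurable_const

lemma abs_truncScaled_le_one (B x : ℝ) : |truncScaled B x| ≤ 1 := by
  unfold truncScaled
  split_ifs with h <;> simp [h]

lemma truncScaled_of_abs_le {B x : ℝ} (hB : 0 < B) (hx : |x| ≤ B) :
    truncScaled B x = x / B := by
  rw [truncScaled, if_pos]
  rwa [abs_div, abs_of_pos hB, div_le_one hB]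

lemma memLp_truncScaled_comp {P : Measure Ω} [IsFiniteMeasure P] {X : Ω → ℝ}
    (hX : Measurable X) (B : ℝ) (p : ENNReal) : MemLp (fun ω => truncScaled B (X ω)) p P :=
  MemLp.of_bound ((measurable_truncScaled B).comp hX).aestronglyMeasurable 1
    (ae_of_all _ fun ω => abs_truncScaled_le_one B (X ω))

lemma half_le_abs_sum_truncScaled_sub {ι : Type*} (s : Finset ι) (z : ι → ℝ) {B m : ℝ}
    (hB : 0 < B) (hz : ∀ k ∈ s, |z k| ≤ B) (hsum : B ≤ |∑ k ∈ s, z k|) (hm : |m| ≤ 1 / 2) :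
    1 / 2 ≤ |∑ k ∈ s, truncScaled B (z k) - m| := by
  have hT : ∑ k ∈ s, truncScaled B (z k) = (∑ k ∈ s, z k) / B := by
    rw [Finset.sum_div]
    exact Finset.sum_congr rfl fun k hk => truncScaled_of_abs_le hB (hz k hk)
  have hT_ge : 1 ≤ |∑ k ∈ s, truncScaled B (z k)| := by
    rwa [hT, abs_div, abs_of_pos hB, le_div_iff₀ hB, one_mul]
  linarith [abs_sub_abs_le_abs_sub (∑ k ∈ s, truncScaled B (z k)) m]

end truncScaled

lemma measure_le_abs_sum_sub_integral_le {Ω ι : Type*} [MeasurableSpace Ω] {P : Measure Ω}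
    [IsProbabilityMeasure P] {Y : ι → Ω → ℝ} (hY : iIndepFun Y P) (s : Finset ι)
    (hL2 : ∀ k ∈ s, MemLp (Y k) 2 P) {c : ℝ} (hc : 0 < c) :
    P {ω | c ≤ |∑ k ∈ s, Y k ω - ∫ ω', ∑ k ∈ s, Y k ω' ∂P|} ≤
      ENNReal.ofReal ((∑ k ∈ s, variance (Y k) P) / c ^ 2) := by
  have hvar : variance (∑ k ∈ s, Y k) P = ∑ k ∈ s, variance (Y k) P :=
    IndepFun.variance_sum hL2 fun i _ j _ hij => hY.indepFun hij
  have := meas_ge_le_variance_div_sq (memLp_finsetSum' s hL2) hc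
  simpa only [hvar, Finset.sum_apply] using this

lemma measure_le_abs_sum_le_of_truncScaled {Ω ι : Type*} [MeasurableSpace Ω] {P : Measure Ω}
    [IsProbabilityMeasure P] {Z : ι → Ω → ℝ} (hZ : ∀ k, Measurable (Z k))
    (hindep : iIndepFun Z P) (s : Finset ι) {B : ℝ} (hB : 0 < B)
    (hmean : ∑ k ∈ s, |∫ ω, truncScaled B (Z k ω) ∂P| ≤ 1 / 2) :
    P {ω | B ≤ |∑ k ∈ s, Z k ω|} ≤
      ∑ k ∈ s, P {ω | B < |Z k ω|} +
        ENNReal.ofReal (4 * ∑ k ∈ s, variance (fun ω => truncScaled B (Z k ω)) P) := by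
  set Y : ι → Ω → ℝ := fun k ω => truncScaled B (Z k ω)
  have hL2 : ∀ k ∈ s, MemLp (Y k) 2 P := fun k _ => memLp_truncScaled_comp (hZ k) B 2
  set m := ∫ ω, ∑ k ∈ s, Y k ω ∂P
  have hm : |m| ≤ 1 / 2 := by
    have hm_eq : m = ∑ k ∈ s, ∫ ω, Y k ω ∂P :=
      integral_finsetSum s fun k hk => (hL2 k hk).integrable one_le_two
    rw [hm_eq]
    exact (Finset.abs_sum_le_sum_abs _ _).trans hmean
  have hincl : {ω | B ≤ |∑ k ∈ s, Z k ω|} ⊆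
      (⋃ k ∈ s, {ω | B < |Z k ω|}) ∪ {ω | 1 / 2 ≤ |∑ k ∈ s, Y k ω - m|} := by
    intro ω hω
    by_cases hbig : ∃ k ∈ s, B < |Z k ω|
    · obtain ⟨k, hk, hZk⟩ := hbig
      exact Or.inl (Set.mem_biUnion hk hZk)
    · push Not at hbig
      exact Or.inr (half_le_abs_sum_truncScaled_sub s (Z · ω) hB hbig hω hm)
  have hcheb := measure_le_abs_sum_sub_integral_le (hindep.comp _ fun _ =>
    measurable_truncScaled B) s hL2 one_half_pos
  calc P {ω | B ≤ |∑ k ∈ s, Z k ω|}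
      ≤ P (⋃ k ∈ s, {ω | B < |Z k ω|}) + P {ω | 1 / 2 ≤ |∑ k ∈ s, Y k ω - m|} :=
        (measure_mono hincl).trans (measure_union_le _ _)
    _ ≤ ∑ k ∈ s, P {ω | B < |Z k ω|} +
        ENNReal.ofReal ((∑ k ∈ s, variance (Y k) P) / (1 / 2) ^ 2) :=
        add_le_add (measure_biUnion_finset_le _ _) hcheb
    _ = _ := by congr 2; ring

lemma sum_Icc_le_tsum_succ (f : ℕ → ENNReal) (n : ℕ) :
    ∑ k ∈ Finset.Icc 1 n, f k ≤ ∑' i, f (i + 1) := by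
  rw [← Finset.Ico_add_one_right_eq_Icc, Finset.sum_Ico_eq_sum_range]
  simpa only [add_comm 1, Nat.add_sub_cancel] using ENNReal.sum_le_tsum (Finset.range n)

lemma sum_Icc_lt_of_tsum_ofReal_lt {f : ℕ → ℝ} (hf : ∀ k, 0 ≤ f k) {ε : ℝ} (n : ℕ)
    (h : ∑' i, ENNReal.ofReal (f (i + 1)) < ENNReal.ofReal ε) :
    ∑ k ∈ Finset.Icc 1 n, f k < ε := by
  have : ENNReal.ofReal (∑ k ∈ Finset.Icc 1 n, f k) < ENNReal.ofReal ε := by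
    rw [ENNReal.ofReal_sum_of_nonneg fun k _ => hf k]
    exact (sum_Icc_le_tsum_succ _ n).trans_lt h
  exact (ENNReal.ofReal_lt_ofReal_iff'.mp this).1

/-- A three-series theorem for Ps-uniform stochastic nonincreasingness: if the three series of
truncated-and-rescaled means, variances, and exceedance probabilities vanish Ps-uniformly as the
scale `B → ∞`, then the partial sums are Ps-uniformly stochastically nonincreasing. -/
theorem stmt3 {Ω : Type*} [MeasurableSpace Ω] (Ps : Set (Measure Ω))
    (hPs : ∀ P ∈ Ps, IsProbabilityMeasure P)
    (Z : ℕ → Ω → ℝ) (hmeas : ∀ n, Measurable (Z n))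
    (hindep : ∀ P ∈ Ps, iIndepFun Z P)
    (hseries1 : ∀ ε : ℝ, 0 < ε → ∃ B₀ : ℝ, ∀ B ≥ B₀, ∀ P ∈ Ps,
      ∑' n : ℕ, ENNReal.ofReal
        |∫ ω, (if |Z (n + 1) ω / B| ≤ 1 then Z (n + 1) ω / B else 0) ∂P| <
        ENNReal.ofReal ε)
    (hseries2 : ∀ ε : ℝ, 0 < ε → ∃ B₀ : ℝ, ∀ B ≥ B₀, ∀ P ∈ Ps,
      ∑' n : ℕ, ENNReal.ofReal
        (variance (fun ω => if |Z (n + 1) ω / B| ≤ 1 then Z (n + 1) ω / B else 0) P) <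
        ENNReal.ofReal ε)
    (hseries3 : ∀ ε : ℝ, 0 < ε → ∃ B₀ : ℝ, ∀ B ≥ B₀, ∀ P ∈ Ps,
      ∑' n : ℕ, P {ω | B < |Z (n + 1) ω|} < ENNReal.ofReal ε) :
    ∀ δ : ℝ, 0 < δ → ∃ Bδ : ℝ, 0 < Bδ ∧ ∀ n : ℕ, 1 ≤ n → ∀ P ∈ Ps,
      P {ω | Bδ ≤ |∑ k ∈ Finset.Icc 1 n, Z k ω|} < ENNReal.ofReal δ := by
  intro δ hδ
  obtain ⟨B₁, h₁⟩ := hseries1 (1 / 2) one_half_pos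
  obtain ⟨B₂, h₂⟩ := hseries2 (δ / 12) (by positivity)
  obtain ⟨B₃, h₃⟩ := hseries3 (δ / 3) (by positivity)
  set B := max (max B₁ B₂) (max B₃ 1)
  have hB : 0 < B := one_pos.trans_le (by simp [B])
  refine ⟨B, hB, fun n _ P hP => ?_⟩
  have := hPs P hP
  have hmean := sum_Icc_lt_of_tsum_ofReal_lt
    (f := fun k => |∫ ω, truncScaled B (Z k ω) ∂P|) (fun _ => abs_nonneg _) n
    (h₁ B (by simp [B]) P hP)
  have hvar := sum_Icc_lt_of_tsum_ofReal_lt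
    (f := fun k => variance (fun ω => truncScaled B (Z k ω)) P) (fun _ => variance_nonneg _ _) n
    (h₂ B (by simp [B]) P hP)
  have hexc := (sum_Icc_le_tsum_succ (fun k => P {ω | B < |Z k ω|}) n).trans_lt (h₃ B (by simp [B]) P hP)
  calc P {ω | B ≤ |∑ k ∈ Finset.Icc 1 n, Z k ω|}
      ≤ ∑ k ∈ Finset.Icc 1 n, P {ω | B < |Z k ω|} + ENNReal.ofReal
          (4 * ∑ k ∈ Finset.Icc 1 n, variance (fun ω => truncScaled B (Z k ω)) P) :=
        measure_le_abs_sum_le_of_truncScaled hmeas (hindep P hP) _ hB hmean.le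
    _ ≤ ENNReal.ofReal (δ / 3) + ENNReal.ofReal (δ / 3) :=
        add_le_add hexc.le (ENNReal.ofReal_le_ofReal (by linarith))
    _ < ENNReal.ofReal δ := by
        rw [← ENNReal.ofReal_add (by positivity) (by positivity)]
        exact (ENNReal.ofReal_lt_ofReal_iff hδ).mpr (by linarith)
end

section
/- Let (Z_n) be random variables on (Ω, F, 𝒫) whose partial sums S_n = Σ_{i=1}^n Z_i are both a 𝒫-uniform Cauchy sequence and 𝒫-uniformly stochastically nonincreasing. Let (b_n) be positive, nondecreasing, and diverging to ∞. Then (1/b_n) Σ_{i=1}^n b_i Z_i vanishes 𝒫-uniformly almost surely: for every ε > 0, lim_{m→∞} sup_{P∈𝒫} P( sup_{k ≥ m} |(1/b_k) Σ_{i=1}^k b_i Z_i| ≥ ε ) = 0. -/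
/-!
Abel summation writes `∑_{i ≤ k} b_i z_i` through the partial sums of `z`, and for monotone
nonnegative weights bounds `|∑_{m < i ≤ n} b_i z_i|` by `2 b_n` times the largest partial sum of
`z` over `(m, j]`, `j ≤ n`. Split at an index `N` after which the partial sums `S_n` oscillate by
less than `ε / 8`: the tail contributes at most `2 b_k (ε / 8)`, and the head at most
`2 b_N max_{n ≤ N} |S_n|`, which is negligible against `b_k → ∞`. Uniformly in `P`, the
oscillation after `N` is small by the Cauchy hypothesis, and `max_{n ≤ N} |S_n|` is bounded by a
union bound over the finitely many `n ≤ N` and uniform tightness.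
-/

open MeasureTheory Filter

section Abel

open Finset

variable {b z : ℕ → ℝ} {m n : ℕ}

theorem sum_Ioc_mul_eq_sub_sum_Ico (b z : ℕ → ℝ) (hmn : m ≤ n) :
    ∑ i ∈ Ioc m n, b i * z i =
      b n * ∑ i ∈ Ioc m n, z i - ∑ i ∈ Ico m n, (b (i + 1) - b i) * ∑ j ∈ Ioc m i, z j := by
  induction n, hmn using Nat.le_induction with
  | base => simp
  | succ n hmn ih =>
    rw [sum_Ioc_succ_top hmn, sum_Ioc_succ_top hmn, sum_Ico_succ_top hmn, ih]
    ring

theorem abs_sum_Ioc_mul_le (hb : Monotone b) (hbm : 0 ≤ b m) (hmn : m ≤ n) {C : ℝ}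
    (hC : ∀ j, m ≤ j → j ≤ n → |∑ i ∈ Ioc m j, z i| ≤ C) :
    |∑ i ∈ Ioc m n, b i * z i| ≤ 2 * b n * C := by
  have hC0 : 0 ≤ C := by simpa using hC m le_rfl hmn
  have hbn : 0 ≤ b n := hbm.trans (hb hmn)
  have hincr : ∀ i, 0 ≤ b (i + 1) - b i := fun i => sub_nonneg.2 (hb i.le_succ)
  have hrest : |∑ i ∈ Ico m n, (b (i + 1) - b i) * ∑ j ∈ Ioc m i, z j| ≤ (b n - b m) * C :=
    calc |∑ i ∈ Ico m n, (b (i + 1) - b i) * ∑ j ∈ Ioc m i, z j|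
        ≤ ∑ i ∈ Ico m n, (b (i + 1) - b i) * C := by
          refine (abs_sum_le_sum_abs _ _).trans (sum_le_sum fun i hi => ?_)
          rw [abs_mul, abs_of_nonneg (hincr i)]
          obtain ⟨hmi, hin⟩ := mem_Ico.1 hi
          exact mul_le_mul_of_nonneg_left (hC i hmi hin.le) (hincr i)
      _ = (b n - b m) * C := by rw [← sum_mul, sum_Ico_sub b hmn]
  calc |∑ i ∈ Ioc m n, b i * z i|
      ≤ |b n * ∑ i ∈ Ioc m n, z i| + |∑ i ∈ Ico m n, (b (i + 1) - b i) * ∑ j ∈ Ioc m i, z j| := by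
        rw [sum_Ioc_mul_eq_sub_sum_Ico b z hmn]; exact abs_sub _ _
    _ ≤ b n * C + (b n - b m) * C := by
        rw [abs_mul, abs_of_nonneg hbn]
        exact add_le_add (mul_le_mul_of_nonneg_left (hC n hmn le_rfl) hbn) hrest
    _ ≤ 2 * b n * C := by nlinarith

theorem abs_inv_mul_sum_Icc_mul_le (hbpos : ∀ n, 0 < b n) (hb : Monotone b) {N k : ℕ}
    (hNk : N ≤ k) {B η : ℝ} (hB : ∀ n ≤ N, |∑ i ∈ Icc 1 n, z i| ≤ B)
    (hη : ∀ n, N ≤ n → n ≤ k → |∑ i ∈ Icc 1 n, z i - ∑ i ∈ Icc 1 N, z i| ≤ η) :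
    |(b k)⁻¹ * ∑ i ∈ Icc 1 k, b i * z i| ≤ 2 * b N * B / b k + 2 * η := by
  have hIcc : ∀ n, Icc 1 n = Ioc 0 n := Icc_succ_left_eq_Ioc 0
  simp only [hIcc] at hB hη ⊢
  have hhead : |∑ i ∈ Ioc 0 N, b i * z i| ≤ 2 * b N * B :=
    abs_sum_Ioc_mul_le hb (hbpos 0).le N.zero_le fun j _ hj => hB j hj
  have htail : |∑ i ∈ Ioc N k, b i * z i| ≤ 2 * b k * η := by
    refine abs_sum_Ioc_mul_le hb (hbpos N).le hNk fun j hNj hjk => ?_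
    simpa only [← sum_Ioc_consecutive _ N.zero_le hNj, add_sub_cancel_left] using hη j hNj hjk
  rw [← sum_Ioc_consecutive _ N.zero_le hNk, abs_mul, abs_inv, abs_of_pos (hbpos k),
    inv_mul_le_iff₀ (hbpos k), mul_add, mul_div_cancel₀ _ (hbpos k).ne']
  linarith [abs_add_le (∑ i ∈ Ioc 0 N, b i * z i) (∑ i ∈ Ioc N k, b i * z i)]

end Abel

section Uniform

open Finset

variable {Ω : Type*}

theorem exists_pos_measure_biUnion_le_abs_lt [MeasurableSpace Ω] {ι : Type*}
    (Ps : Set (Measure Ω)) (X : ι → Ω → ℝ) (s : Finset ι)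
    (hX : ∀ δ : ℝ, 0 < δ → ∃ B : ℝ, 0 < B ∧ ∀ n ∈ s, ∀ P ∈ Ps,
      P {ω | B ≤ |X n ω|} < ENNReal.ofReal δ)
    {δ : ℝ} (hδ : 0 < δ) :
    ∃ B : ℝ, 0 < B ∧ ∀ P ∈ Ps, P (⋃ n ∈ s, {ω | B ≤ |X n ω|}) < ENNReal.ofReal δ := by
  have hcard : (0 : ℝ) < #s + 1 := by positivity
  obtain ⟨B, hB, hXB⟩ := hX (δ / (#s + 1)) (div_pos hδ hcard)
  refine ⟨B, hB, fun P hP => ?_⟩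
  calc P (⋃ n ∈ s, {ω | B ≤ |X n ω|})
      ≤ ∑ n ∈ s, P {ω | B ≤ |X n ω|} := measure_biUnion_finset_le _ _
    _ ≤ ∑ _n ∈ s, ENNReal.ofReal (δ / (#s + 1)) := sum_le_sum fun n hn => (hXB n hn P hP).le
    _ = ENNReal.ofReal (#s * (δ / (#s + 1))) := by
        rw [sum_const, nsmul_eq_mul, ENNReal.ofReal_mul (Nat.cast_nonneg _), ENNReal.ofReal_natCast]
    _ < ENNReal.ofReal δ := by
        rw [ENNReal.ofReal_lt_ofReal_iff hδ, mul_div_assoc', div_lt_iff₀ hcard]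
        linarith

theorem setOf_exists_le_abs_inv_mul_sum_subset {b : ℕ → ℝ} (hbpos : ∀ n, 0 < b n)
    (hb : Monotone b) (Z : ℕ → Ω → ℝ) {ε B : ℝ} (hε : 0 < ε) (hB : 0 < B) {N m : ℕ}
    (hNm : N ≤ m) (hbm : ∀ k ≥ m, 4 * b N * B / ε ≤ b k) :
    {ω | ∃ k ≥ m, ε ≤ |(b k)⁻¹ * ∑ i ∈ Icc 1 k, b i * Z i ω|} ⊆
      {ω | ∃ k ≥ N, ∃ n ≥ N, ε / 8 ≤ |∑ i ∈ Icc 1 k, Z i ω - ∑ i ∈ Icc 1 n, Z i ω|} ∪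
        ⋃ n ∈ Icc 1 N, {ω | B ≤ |∑ i ∈ Icc 1 n, Z i ω|} := by
  rintro ω ⟨k, hkm, hk⟩
  by_contra hω
  obtain ⟨hCauchy, hBdd⟩ : (∀ k ≥ N, ∀ n ≥ N,
      |∑ i ∈ Icc 1 k, Z i ω - ∑ i ∈ Icc 1 n, Z i ω| < ε / 8) ∧
      ∀ n, 1 ≤ n → n ≤ N → |∑ i ∈ Icc 1 n, Z i ω| < B := by
    simpa [not_or] using hω
  have hS : ∀ n ≤ N, |∑ i ∈ Icc 1 n, Z i ω| ≤ B := fun n hn => by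
    rcases n.eq_zero_or_pos with rfl | hn0
    · simpa using hB.le
    · exact (hBdd n hn0 hn).le
  have hbound := abs_inv_mul_sum_Icc_mul_le (z := fun i => Z i ω) hbpos hb (hNm.trans hkm) hS
    fun n hNn _ => (hCauchy n hNn N le_rfl).le
  have hhead : 2 * b N * B / b k ≤ ε / 2 := by
    rw [div_le_iff₀ (hbpos k)]
    have := hbm k hkm
    rw [div_le_iff₀ hε] at this
    linarith
  linarith

end Uniform

theorem stmt4_general {Ω : Type*} [MeasurableSpace Ω] (Ps : Set (Measure Ω))
    (Z : ℕ → Ω → ℝ)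
    (b : ℕ → ℝ) (hbpos : ∀ n, 0 < b n) (hbmono : Monotone b)
    (hbtop : Tendsto b atTop atTop)
    (hCauchy : ∀ ε : ℝ, 0 < ε → ∀ δ : ℝ, 0 < δ → ∃ M : ℕ, ∀ m ≥ M, ∀ P ∈ Ps,
      P {ω | ∃ k ≥ m, ∃ n ≥ m, ε ≤
        |(∑ i ∈ Finset.Icc 1 k, Z i ω) - (∑ i ∈ Finset.Icc 1 n, Z i ω)|} <
        ENNReal.ofReal δ)
    (hBdd : ∀ δ : ℝ, 0 < δ → ∃ B : ℝ, 0 < B ∧ ∀ n : ℕ, 1 ≤ n → ∀ P ∈ Ps,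
      P {ω | B ≤ |∑ i ∈ Finset.Icc 1 n, Z i ω|} < ENNReal.ofReal δ) :
    ∀ ε : ℝ, 0 < ε → ∀ δ : ℝ, 0 < δ → ∃ M : ℕ, ∀ m ≥ M, ∀ P ∈ Ps,
      P {ω | ∃ k ≥ m, ε ≤ |(b k)⁻¹ * ∑ i ∈ Finset.Icc 1 k, b i * Z i ω|} <
        ENNReal.ofReal δ := by
  intro ε hε δ hδ
  obtain ⟨N, hN⟩ := hCauchy (ε / 8) (by positivity) (δ / 2) (half_pos hδ)
  obtain ⟨B, hB, hPB⟩ := exists_pos_measure_biUnion_le_abs_lt Ps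
    (fun n ω => ∑ i ∈ Finset.Icc 1 n, Z i ω) (Finset.Icc 1 N)
    (fun η hη => (hBdd η hη).imp fun _ ⟨hB, h⟩ => ⟨hB, fun n hn => h n (Finset.mem_Icc.1 hn).1⟩)
    (half_pos hδ)
  obtain ⟨M, hM⟩ := eventually_atTop.1 (hbtop.eventually_ge_atTop (4 * b N * B / ε))
  refine ⟨max M N, fun m hm P hP => ?_⟩
  calc _ ≤ _ := measure_mono (setOf_exists_le_abs_inv_mul_sum_subset hbpos hbmono Z hε hB
        ((le_max_right M N).trans hm) fun k hk => hM k ((le_max_left M N).trans (hm.trans hk)))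
    _ ≤ _ := measure_union_le _ _
    _ < ENNReal.ofReal (δ / 2) + ENNReal.ofReal (δ / 2) :=
        ENNReal.add_lt_add (hN N le_rfl P hP) (hPB P hP)
    _ = ENNReal.ofReal δ := by
        rw [← ENNReal.ofReal_add (half_pos hδ).le (half_pos hδ).le, add_halves]

/-- A Ps-uniform stochastic generalization of Kronecker's lemma: if the partial sums
`S_n = Σ_{i=1}^n Z_i` are Ps-uniformly Cauchy and Ps-uniformly stochastically nonincreasing, and
`b_n` is positive, nondecreasing, and diverging to ∞, then `(1/b_n) Σ_{i=1}^n b_i Z_i` vanishes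
Ps-uniformly almost surely. -/
theorem stmt4 {Ω : Type*} [MeasurableSpace Ω] (Ps : Set (Measure Ω))
    (hPs : ∀ P ∈ Ps, IsProbabilityMeasure P)
    (Z : ℕ → Ω → ℝ) (hmeas : ∀ n, Measurable (Z n))
    (b : ℕ → ℝ) (hbpos : ∀ n, 0 < b n) (hbmono : Monotone b)
    (hbtop : Tendsto b atTop atTop)
    (hCauchy : ∀ ε : ℝ, 0 < ε → ∀ δ : ℝ, 0 < δ → ∃ M : ℕ, ∀ m ≥ M, ∀ P ∈ Ps,
      P {ω | ∃ k ≥ m, ∃ n ≥ m, ε ≤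
        |(∑ i ∈ Finset.Icc 1 k, Z i ω) - (∑ i ∈ Finset.Icc 1 n, Z i ω)|} <
        ENNReal.ofReal δ)
    (hBdd : ∀ δ : ℝ, 0 < δ → ∃ B : ℝ, 0 < B ∧ ∀ n : ℕ, 1 ≤ n → ∀ P ∈ Ps,
      P {ω | B ≤ |∑ i ∈ Finset.Icc 1 n, Z i ω|} < ENNReal.ofReal δ) :
    ∀ ε : ℝ, 0 < ε → ∀ δ : ℝ, 0 < δ → ∃ M : ℕ, ∀ m ≥ M, ∀ P ∈ Ps,
      P {ω | ∃ k ≥ m, ε ≤ |(b k)⁻¹ * ∑ i ∈ Finset.Icc 1 k, b i * Z i ω|} <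
        ENNReal.ofReal δ :=
  stmt4_general Ps Z b hbpos hbmono hbtop hCauchy hBdd
end

section
/- Let (E_n) be events that are independent under each P in a family 𝒫 of probability measures. If lim_{m→∞} sup_{P∈𝒫} Σ_{k=m}^∞ P(E_k) > 0 (possibly infinite), then lim_{m→∞} sup_{P∈𝒫} P( ∪_{k=m}^∞ E_k ) > 0. In fact lim_{m→∞} sup_{P∈𝒫} P(∪_{k=m}^∞ E_k) ≥ 1 − exp( − lim_{m→∞} sup_{P∈𝒫} Σ_{k=m}^∞ P(E_k) ). -/
/-!
For independent events and a finite index set `S`,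
`P(⋃_{i ∈ S} E_i) = 1 - ∏_{i ∈ S} (1 - P(E_i)) ≥ 1 - exp(-∑_{i ∈ S} P(E_i))` since `1 - x ≤ e^{-x}`.
As `∑_{k ≥ m} P(E_k)` is the supremum of its finite partial sums, this gives
`P(⋃_{k ≥ m} E_k) ≥ 1 - e^{-r}` whenever `r < ∑_{k ≥ m} P(E_k)`; taking suprema over `P ∈ 𝒫`
and letting `r` increase to the limit `L` gives the bound `1 - e^{-L}`, which is positive when `L` is.
-/

open MeasureTheory

namespace ProbabilityTheory

variable {Ω ι : Type*} [MeasurableSpace Ω] {P : Measure Ω} {F : ι → Set Ω}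

lemma iIndepSet.measureReal_biInter_compl (hF : ∀ i, MeasurableSet (F i)) (hind : iIndepSet F P)
    (S : Finset ι) : P.real (⋂ i ∈ S, (F i)ᶜ) = ∏ i ∈ S, (1 - P.real (F i)) := by
  have := hind.isProbabilityMeasure
  rw [measureReal_def, ((iIndepSet_iff_iIndep F P).mp hind).meas_biInter
    (fun i _ => (MeasurableSpace.measurableSet_generateFrom (Set.mem_singleton _)).compl),
    ENNReal.toReal_prod]
  exact Finset.prod_congr rfl fun i _ => probReal_compl_eq_one_sub (hF i)

lemma iIndepSet.one_sub_exp_neg_sum_le_measureReal_biUnion (hF : ∀ i, MeasurableSet (F i))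
    (hind : iIndepSet F P) (S : Finset ι) :
    1 - Real.exp (-∑ i ∈ S, P.real (F i)) ≤ P.real (⋃ i ∈ S, F i) := by
  have := hind.isProbabilityMeasure
  calc 1 - Real.exp (-∑ i ∈ S, P.real (F i))
      = 1 - ∏ i ∈ S, Real.exp (-P.real (F i)) := by
        rw [← Finset.sum_neg_distrib, Real.exp_sum]
    _ ≤ 1 - ∏ i ∈ S, (1 - P.real (F i)) := by
        gcongr with i
        · exact fun i _ => sub_nonneg.mpr measureReal_le_one
        · linarith [Real.add_one_le_exp (-P.real (F i))]
    _ = P.real (⋃ i ∈ S, F i) := by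
        rw [← hind.measureReal_biInter_compl hF, ← Set.compl_iUnion₂,
          probReal_compl_eq_one_sub (S.measurableSet_biUnion fun i _ => hF i), sub_sub_cancel]

lemma iIndepSet.ofReal_one_sub_exp_neg_le_measure_iUnion (hF : ∀ i, MeasurableSet (F i))
    (hind : iIndepSet F P) {r : ℝ} (hr : ENNReal.ofReal r < ∑' i, P (F i)) :
    ENNReal.ofReal (1 - Real.exp (-r)) ≤ P (⋃ i, F i) := by
  have := hind.isProbabilityMeasure
  obtain ⟨S, hS⟩ := lt_iSup_iff.mp (ENNReal.tsum_eq_iSup_sum ▸ hr)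
  have hrS : r < ∑ i ∈ S, P.real (F i) := by
    refine (ENNReal.ofReal_lt_ofReal_iff'.mp ?_).1
    rwa [ENNReal.ofReal_sum_of_nonneg fun _ _ => measureReal_nonneg,
      Finset.sum_congr rfl fun i _ => ofReal_measureReal]
  calc ENNReal.ofReal (1 - Real.exp (-r))
      ≤ ENNReal.ofReal (P.real (⋃ i ∈ S, F i)) := by
        gcongr
        exact (hind.one_sub_exp_neg_sum_le_measureReal_biUnion hF S).trans' (by gcongr)
    _ ≤ ENNReal.ofReal (P.real (⋃ i, F i)) :=
        ENNReal.ofReal_le_ofReal <|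
          measureReal_mono (Set.iUnion₂_subset fun i _ => Set.subset_iUnion F i)
    _ = P (⋃ i, F i) := ofReal_measureReal

lemma ofReal_one_sub_exp_neg_le_iSup_measure_iUnion {Ps : Set (Measure Ω)}
    (hF : ∀ i, MeasurableSet (F i)) (hind : ∀ P ∈ Ps, iIndepSet F P) {r : ℝ}
    (hr : ENNReal.ofReal r ≤ ⨆ P ∈ Ps, ∑' i, P (F i)) :
    ENNReal.ofReal (1 - Real.exp (-r)) ≤ ⨆ P ∈ Ps, P (⋃ i, F i) := by
  rcases le_or_gt r 0 with hr_nonpos | hr_pos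
  · rw [ENNReal.ofReal_eq_zero.mpr (by linarith [Real.one_le_exp (neg_nonneg.mpr hr_nonpos)])]
    exact zero_le
  -- the supremum over `Ps` need not be attained, so approach `r` from below
  have hcont : ContinuousAt (fun s => ENNReal.ofReal (1 - Real.exp (-s))) r :=
    ENNReal.continuous_ofReal.continuousAt.comp (by fun_prop)
  refine le_of_tendsto (hcont.tendsto.mono_left (nhdsWithin_le_nhds (s := Set.Iio r))) ?_
  filter_upwards [Ioo_mem_nhdsLT hr_pos] with s hs
  obtain ⟨P, hP, hsP⟩ : ∃ P ∈ Ps, ENNReal.ofReal s < ∑' i, P (F i) := by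
    simpa only [lt_iSup_iff, exists_prop] using
      ((ENNReal.ofReal_lt_ofReal_iff hr_pos).2 hs.2).trans_le hr
  exact ((hind P hP).ofReal_one_sub_exp_neg_le_measure_iUnion hF hsP).trans
    (le_biSup (fun P => P (⋃ i, F i)) hP)

end ProbabilityTheory

open ProbabilityTheory

theorem stmt5_general {Ω : Type*} [MeasurableSpace Ω] (Ps : Set (Measure Ω))
    (E : ℕ → Set Ω) (hE : ∀ n, MeasurableSet (E n))
    (hindep : ∀ P ∈ Ps, iIndepSet E P)
    (hpos : 0 < ⨅ m : ℕ, ⨆ P ∈ Ps, ∑' k : ℕ, P (E (m + k))) :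
    (0 < ⨅ m : ℕ, ⨆ P ∈ Ps, P (⋃ k : ℕ, E (m + k))) ∧
      ∀ r : ℝ, 0 ≤ r →
        ENNReal.ofReal r ≤ (⨅ m : ℕ, ⨆ P ∈ Ps, ∑' k : ℕ, P (E (m + k))) →
        ENNReal.ofReal (1 - Real.exp (-r)) ≤
          ⨅ m : ℕ, ⨆ P ∈ Ps, P (⋃ k : ℕ, E (m + k)) := by
  have hbound : ∀ r : ℝ, 0 ≤ r →
      ENNReal.ofReal r ≤ (⨅ m : ℕ, ⨆ P ∈ Ps, ∑' k : ℕ, P (E (m + k))) →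
      ENNReal.ofReal (1 - Real.exp (-r)) ≤ ⨅ m : ℕ, ⨆ P ∈ Ps, P (⋃ k : ℕ, E (m + k)) :=
    fun r _ hr => le_iInf fun m =>
      ofReal_one_sub_exp_neg_le_iSup_measure_iUnion (fun k => hE (m + k))
        (fun P hP => (hindep P hP).precomp (add_right_injective m)) (hr.trans (iInf_le _ m))
  refine ⟨?_, hbound⟩
  obtain ⟨r, hr_nonneg, hr_pos, hr_lt⟩ := ENNReal.lt_iff_exists_real_btwn.mp hpos
  refine lt_of_lt_of_le ?_ (hbound r hr_nonneg hr_lt.le)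
  have : Real.exp (-r) < 1 := Real.exp_lt_one_iff.mpr (by linarith [ENNReal.ofReal_pos.mp hr_pos])
  exact ENNReal.ofReal_pos.mpr (by linarith)

/-- The second Ps-uniform Borel–Cantelli lemma: for events independent under each `P ∈ Ps`, if
`lim_m sup_{P∈Ps} Σ_{k=m}^∞ P(E_k) > 0` (the limit equals the infimum over `m` since the
quantity is nonincreasing in `m`), then `lim_m sup_{P∈Ps} P(∪_{k=m}^∞ E_k) > 0`; in fact the
latter limit is at least `1 - exp(-L)` where `L` is the former limit. -/
theorem stmt5 {Ω : Type*} [MeasurableSpace Ω] (Ps : Set (Measure Ω))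
    (hPs : ∀ P ∈ Ps, IsProbabilityMeasure P)
    (E : ℕ → Set Ω) (hE : ∀ n, MeasurableSet (E n))
    (hindep : ∀ P ∈ Ps, iIndepSet E P)
    (hpos : 0 < ⨅ m : ℕ, ⨆ P ∈ Ps, ∑' k : ℕ, P (E (m + k))) :
    (0 < ⨅ m : ℕ, ⨆ P ∈ Ps, P (⋃ k : ℕ, E (m + k))) ∧
      ∀ r : ℝ, 0 ≤ r →
        ENNReal.ofReal r ≤ (⨅ m : ℕ, ⨆ P ∈ Ps, ∑' k : ℕ, P (E (m + k))) →
        ENNReal.ofReal (1 - Real.exp (-r)) ≤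
          ⨅ m : ℕ, ⨆ P ∈ Ps, P (⋃ k : ℕ, E (m + k)) :=
  stmt5_general Ps E hE hindep hpos
end

section
/- Let Y be a random variable on (Ω, F) and 𝒫 a family of probability measures, with q > 0. Then lim_{m→∞} sup_{P∈𝒫} E_P(|Y|^q · 1{|Y|^q > m}) = 0 if and only if lim_{m→∞} sup_{P∈𝒫} Σ_{k=m}^∞ P(|Y|^q > k) = 0. -/
open MeasureTheory

open scoped ENNReal

/-!
Write `X = |Y|^q`. Counting the `k` with `m + k < X` gives `∑ₖ P(X > m + k) = E_P ⌈X - m⌉₊`,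
so both conditions compare `E_P ⌈X - m⌉₊` with the truncated moment `E_P(X; X > m)`.
For `m ≥ 1` we have `⌈X - m⌉₊ ≤ X · 1{X > m}`, and on `{X > m}` we have
`X ≤ 2 (X - m/2) ≤ 2 ⌈X - m/2⌉₊`; so each quantity at level `m` is controlled by
the other at level `m` or `m / 2`, uniformly in `P`.
-/

lemma tsum_ite_natCast_add_lt_eq_natCeil (m : ℕ) (x : ℝ) :
    ∑' k : ℕ, (if ((m + k : ℕ) : ℝ) < x then 1 else 0 : ℝ≥0∞) = ⌈x - m⌉₊ := by
  have hmem : ∀ k : ℕ, ((m + k : ℕ) : ℝ) < x ↔ k ∈ Finset.range ⌈x - m⌉₊ := fun k => by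
    rw [Finset.mem_range, Nat.lt_ceil, Nat.cast_add, lt_sub_iff_add_lt']
  simp_rw [hmem]
  rw [tsum_eq_sum fun k hk => if_neg hk, Finset.sum_ite_mem, Finset.inter_self,
    Finset.sum_const, Finset.card_range, nsmul_one]

lemma natCeil_sub_le_self {c x : ℝ} (hc : 1 ≤ c) (hx : c < x) : (⌈x - c⌉₊ : ℝ) ≤ x := by
  have := Nat.ceil_lt_add_one (sub_nonneg.mpr hx.le)
  linarith

lemma le_two_mul_natCeil_sub {c d x : ℝ} (hcd : 2 * c ≤ d) (hx : d < x) :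
    x ≤ 2 * ⌈x - c⌉₊ := by
  have := Nat.le_ceil (x - c)
  linarith

section

variable {Ω : Type*} [MeasurableSpace Ω] {μ : Measure Ω} {X : Ω → ℝ}

theorem tsum_measure_natCast_add_lt_eq_lintegral_natCeil (hX : Measurable X) (m : ℕ) :
    ∑' k : ℕ, μ {ω | ((m + k : ℕ) : ℝ) < X ω} = ∫⁻ ω, (⌈X ω - m⌉₊ : ℝ≥0∞) ∂μ := by
  have hmeas : ∀ c : ℝ, MeasurableSet {ω | c < X ω} := fun c => measurableSet_lt measurable_const hX
  simp_rw [← lintegral_indicator_one (hmeas _), ← tsum_ite_natCast_add_lt_eq_natCeil]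
  rw [← lintegral_tsum fun k => (measurable_one.indicator (hmeas _)).aemeasurable]
  rfl

theorem lintegral_natCeil_sub_le_setLIntegral (hX : Measurable X) {c : ℝ} (hc : 1 ≤ c) :
    ∫⁻ ω, (⌈X ω - c⌉₊ : ℝ≥0∞) ∂μ ≤ ∫⁻ ω in {ω | c < X ω}, ENNReal.ofReal (X ω) ∂μ := by
  rw [← lintegral_indicator (measurableSet_lt measurable_const hX)]
  refine lintegral_mono fun ω => ?_
  by_cases hω : c < X ω
  · rw [Set.indicator_of_mem (s := {ω | c < X ω}) hω, ← ENNReal.ofReal_natCast]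
    exact ENNReal.ofReal_le_ofReal (natCeil_sub_le_self hc hω)
  · simp [Nat.ceil_eq_zero.mpr (sub_nonpos.mpr (not_lt.mp hω))]

theorem setLIntegral_le_two_mul_lintegral_natCeil (hX : Measurable X) {c d : ℝ}
    (hcd : 2 * c ≤ d) :
    ∫⁻ ω in {ω | d < X ω}, ENNReal.ofReal (X ω) ∂μ ≤ 2 * ∫⁻ ω, (⌈X ω - c⌉₊ : ℝ≥0∞) ∂μ := by
  rw [← lintegral_const_mul _ (by fun_prop)]
  refine (setLIntegral_mono' (measurableSet_lt measurable_const hX) fun ω hω => ?_).trans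
    (setLIntegral_le_lintegral _ _)
  rw [← ENNReal.ofReal_natCast, ← ENNReal.ofReal_ofNat 2, ← ENNReal.ofReal_mul zero_le_two]
  exact ENNReal.ofReal_le_ofReal (le_two_mul_natCeil_sub hcd hω)

theorem tsum_measure_natCast_add_lt_le_ofReal_setIntegral (hX : Measurable X) (hX0 : 0 ≤ X)
    (hint : Integrable X μ) {m : ℕ} (hm : 1 ≤ m) :
    ∑' k : ℕ, μ {ω | ((m + k : ℕ) : ℝ) < X ω} ≤
      ENNReal.ofReal (∫ ω in {ω | (m : ℝ) < X ω}, X ω ∂μ) := by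
  rw [tsum_measure_natCast_add_lt_eq_lintegral_natCeil hX,
    ofReal_integral_eq_lintegral_ofReal hint.restrict (ae_of_all _ hX0)]
  exact lintegral_natCeil_sub_le_setLIntegral hX (by exact_mod_cast hm)

theorem ofReal_setIntegral_le_two_mul_tsum_measure_natCast_add_lt (hX : Measurable X)
    (hX0 : 0 ≤ X) {j m : ℕ} (hjm : 2 * j ≤ m) :
    ENNReal.ofReal (∫ ω in {ω | (m : ℝ) < X ω}, X ω ∂μ) ≤
      2 * ∑' k : ℕ, μ {ω | ((j + k : ℕ) : ℝ) < X ω} := by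
  rw [integral_eq_lintegral_of_nonneg_ae (ae_of_all _ hX0) hX.aestronglyMeasurable,
    tsum_measure_natCast_add_lt_eq_lintegral_natCeil hX]
  exact ENNReal.ofReal_toReal_le.trans
    (setLIntegral_le_two_mul_lintegral_natCeil hX (by exact_mod_cast hjm))

end

theorem stmt7_general {Ω : Type*} [MeasurableSpace Ω] (Ps : Set (Measure Ω))
    (Y : Ω → ℝ) (hY : Measurable Y) (q : ℝ)
    (hint : ∀ P ∈ Ps, Integrable (fun ω => |Y ω| ^ q) P) :
    (∀ ε : ℝ, 0 < ε → ∃ M : ℕ, ∀ m ≥ M, ∀ P ∈ Ps,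
        ∫ ω in {ω | (m : ℝ) < |Y ω| ^ q}, |Y ω| ^ q ∂P < ε) ↔
      (∀ ε : ℝ, 0 < ε → ∃ M : ℕ, ∀ m ≥ M, ∀ P ∈ Ps,
        ∑' k : ℕ, P {ω | ((m + k : ℕ) : ℝ) < |Y ω| ^ q} < ENNReal.ofReal ε) := by
  have hX : Measurable fun ω => |Y ω| ^ q := by fun_prop
  have hX0 : 0 ≤ fun ω => |Y ω| ^ q := fun ω => Real.rpow_nonneg (abs_nonneg _) q
  constructor
  · intro h ε hε
    obtain ⟨M, hM⟩ := h ε hε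
    refine ⟨max M 1, fun m hm P hP => ?_⟩
    refine (tsum_measure_natCast_add_lt_le_ofReal_setIntegral hX hX0 (hint P hP)
      (le_of_max_le_right hm)).trans_lt ?_
    exact (ENNReal.ofReal_lt_ofReal_iff hε).2 (hM m (le_of_max_le_left hm) P hP)
  · intro h ε hε
    obtain ⟨M, hM⟩ := h (ε / 2) (half_pos hε)
    refine ⟨2 * M, fun m hm P hP => ?_⟩
    rw [← ENNReal.ofReal_lt_ofReal_iff hε]
    calc ENNReal.ofReal (∫ ω in {ω | (m : ℝ) < |Y ω| ^ q}, |Y ω| ^ q ∂P)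
        ≤ 2 * ∑' k : ℕ, P {ω | ((m / 2 + k : ℕ) : ℝ) < |Y ω| ^ q} :=
          ofReal_setIntegral_le_two_mul_tsum_measure_natCast_add_lt hX hX0 (Nat.mul_div_le m 2)
      _ < 2 * ENNReal.ofReal (ε / 2) :=
          ENNReal.mul_lt_mul_right two_ne_zero ENNReal.ofNat_ne_top
            (hM (m / 2) (by omega) P hP)
      _ = ENNReal.ofReal ε := by
          rw [← ENNReal.ofReal_ofNat 2, ← ENNReal.ofReal_mul zero_le_two,
            mul_div_cancel₀ _ two_ne_zero]

/-- Ps-uniform integrability of the q-th moment is equivalent to Ps-uniformly vanishing tail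
sums of tail probabilities. -/
theorem stmt7 {Ω : Type*} [MeasurableSpace Ω] (Ps : Set (Measure Ω))
    (hPs : ∀ P ∈ Ps, IsProbabilityMeasure P)
    (Y : Ω → ℝ) (hY : Measurable Y) (q : ℝ) (hq : 0 < q)
    (hint : ∀ P ∈ Ps, Integrable (fun ω => |Y ω| ^ q) P) :
    (∀ ε : ℝ, 0 < ε → ∃ M : ℕ, ∀ m ≥ M, ∀ P ∈ Ps,
        ∫ ω in {ω | (m : ℝ) < |Y ω| ^ q}, |Y ω| ^ q ∂P < ε) ↔
      (∀ ε : ℝ, 0 < ε → ∃ M : ℕ, ∀ m ≥ M, ∀ P ∈ Ps,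
        ∑' k : ℕ, P {ω | ((m + k : ℕ) : ℝ) < |Y ω| ^ q} < ENNReal.ofReal ε) :=
  stmt7_general Ps Y hY q hint
end

section
/- Let h* : [0,∞) → [0,∞) be concave, strictly increasing, diverging to ∞, with h*(0) ≥ 1, and let 0 < q < p ≤ 2 with δ := p/q − 1 ∈ (0,1). Then h̃(x) := (h*(x))^δ is concave, strictly increasing, diverging to ∞, satisfies h̃(0) ≥ 1 and h̃(x) ≤ h*(x) for all x ≥ 0, and for all real 0 ≤ a ≤ b with b > 0, a^{p/q}/b^{p/q} ≤ (a·h̃(a))/(b·h̃(b)). -/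
open Set Filter

/-! A concave `f` with `f 0 ≥ 0` is star-shaped: `t f(x) ≤ f(t x)` for `t ∈ [0,1]`, so
`x ↦ f(x)/x` is antitone on `(0,∞)`, i.e. `a f(b) ≤ b f(a)` for `0 ≤ a ≤ b`. Composing the concave
`h⋆ ≥ 1` with the monotone concave power `y ↦ y^δ` gives the properties of `h̃`, and writing
`(a/b)^(p/q) = (a/b) (a/b)^δ` the ratio inequality reduces to `(a/b)^δ ≤ (h⋆(a)/h⋆(b))^δ`. -/

theorem ConcaveOn.smul_le_apply_smul {E : Type*} [AddCommGroup E] [Module ℝ E] {s : Set E}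
    {f : E → ℝ} (hf : ConcaveOn ℝ s f) (h0 : (0 : E) ∈ s) (hf0 : 0 ≤ f 0) {x : E} (hx : x ∈ s)
    {t : ℝ} (ht₀ : 0 ≤ t) (ht₁ : t ≤ 1) : t * f x ≤ f (t • x) := by
  have h := hf.2 h0 hx (sub_nonneg.2 ht₁) ht₀ (sub_add_cancel 1 t)
  simp only [smul_zero, zero_add, smul_eq_mul] at h
  nlinarith [mul_nonneg (sub_nonneg.2 ht₁) hf0]

theorem ConcaveOn.mul_apply_le_mul_apply {f : ℝ → ℝ} (hf : ConcaveOn ℝ (Ici 0) f)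
    (hf0 : 0 ≤ f 0) {a b : ℝ} (ha : 0 ≤ a) (hab : a ≤ b) : a * f b ≤ b * f a := by
  rcases hab.eq_or_lt with rfl | hab
  · rfl
  have hb : 0 < b := ha.trans_lt hab
  have h := hf.smul_le_apply_smul self_mem_Ici hf0 (mem_Ici.2 hb.le) (div_nonneg ha hb.le)
    ((div_le_one hb).2 hab.le)
  rw [smul_eq_mul, div_mul_cancel₀ a hb.ne'] at h
  calc a * f b = b * (a / b * f b) := by field_simp
    _ ≤ b * f a := mul_le_mul_of_nonneg_left h hb.le

theorem ConcaveOn.rpow_comp {E : Type*} [AddCommGroup E] [Module ℝ E] {s : Set E} {f : E → ℝ}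
    (hf : ConcaveOn ℝ s f) (hf_nonneg : ∀ x ∈ s, 0 ≤ f x) {r : ℝ} (hr₀ : 0 ≤ r) (hr₁ : r ≤ 1) :
    ConcaveOn ℝ s (fun x => f x ^ r) := by
  refine ⟨hf.1, fun x hx y hy a b ha hb hab => ?_⟩
  calc a • f x ^ r + b • f y ^ r ≤ (a • f x + b • f y) ^ r :=
        (Real.concaveOn_rpow hr₀ hr₁).2 (hf_nonneg x hx) (hf_nonneg y hy) ha hb hab
    _ ≤ f (a • x + b • y) ^ r := by
        have := hf_nonneg x hx
        have := hf_nonneg y hy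
        exact Real.rpow_le_rpow (by positivity) (hf.2 hx hy ha hb hab) hr₀

theorem Real.rpow_div_rpow_le_mul_rpow_div {a b u v r : ℝ} (ha : 0 ≤ a) (hb : 0 < b)
    (hu : 0 < u) (hv : 0 < v) (habuv : a * v ≤ b * u) (hr : 1 ≤ r) :
    a ^ r / b ^ r ≤ a * u ^ (r - 1) / (b * v ^ (r - 1)) := by
  have hab : 0 ≤ a / b := div_nonneg ha hb.le
  have hratio : a / b ≤ u / v := by
    rw [div_le_div_iff₀ hb hv]
    linarith
  calc a ^ r / b ^ r = a / b * (a / b) ^ (r - 1) := by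
        rw [← Real.div_rpow ha hb.le, ← Real.rpow_one_add' hab (by linarith), add_sub_cancel]
    _ ≤ a / b * (u / v) ^ (r - 1) := by gcongr
    _ = a * u ^ (r - 1) / (b * v ^ (r - 1)) := by
        rw [Real.div_rpow hu.le hv.le]
        field_simp

theorem stmt9_general (hstar : ℝ → ℝ) (hconc : ConcaveOn ℝ (Ici (0 : ℝ)) hstar)
    (hmono : StrictMonoOn hstar (Ici (0 : ℝ)))
    (htop : Tendsto hstar atTop atTop) (h1 : 1 ≤ hstar 0)
    (p q : ℝ)
    (hδ0 : 0 < p / q - 1) (hδ1 : p / q - 1 < 1) :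
    ConcaveOn ℝ (Ici (0 : ℝ)) (fun x => hstar x ^ (p / q - 1)) ∧
    StrictMonoOn (fun x => hstar x ^ (p / q - 1)) (Ici (0 : ℝ)) ∧
    Tendsto (fun x => hstar x ^ (p / q - 1)) atTop atTop ∧
    (1 : ℝ) ≤ hstar 0 ^ (p / q - 1) ∧
    (∀ x : ℝ, 0 ≤ x → hstar x ^ (p / q - 1) ≤ hstar x) ∧
    (∀ a b : ℝ, 0 ≤ a → a ≤ b → 0 < b →
      a ^ (p / q) / b ^ (p / q) ≤
        (a * hstar a ^ (p / q - 1)) / (b * hstar b ^ (p / q - 1))) := by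
  have hone : ∀ x ∈ Ici (0 : ℝ), 1 ≤ hstar x := fun x hx =>
    h1.trans (hmono.monotoneOn self_mem_Ici hx hx)
  have hpos : ∀ x ∈ Ici (0 : ℝ), 0 < hstar x := fun x hx => one_pos.trans_le (hone x hx)
  refine ⟨hconc.rpow_comp (fun x hx => (hpos x hx).le) hδ0.le hδ1.le,
    fun x hx y hy hxy => Real.rpow_lt_rpow (hpos x hx).le (hmono hx hy hxy) hδ0,
    (tendsto_rpow_atTop hδ0).comp htop, Real.one_le_rpow h1 hδ0.le,
    fun x hx => Real.rpow_le_self_of_one_le (hone x hx) hδ1.le, ?_⟩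
  intro a b ha hab hb
  exact Real.rpow_div_rpow_le_mul_rpow_div ha hb (hpos a ha)
    (hpos b (ha.trans hab)) (hconc.mul_apply_le_mul_apply (hpos 0 self_mem_Ici).le ha hab)
    (by linarith)

/-- If `h⋆ : [0,∞) → [0,∞)` is concave, strictly increasing, diverging to ∞ with `h⋆ 0 ≥ 1`,
and `0 < q < p ≤ 2` with `δ := p/q - 1 ∈ (0,1)`, then `h̃ := (h⋆)^δ` is concave, strictly
increasing, diverging to ∞, satisfies `h̃ 0 ≥ 1`, `h̃ ≤ h⋆` on `[0,∞)`, and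
`a^(p/q)/b^(p/q) ≤ (a h̃ a)/(b h̃ b)` for `0 ≤ a ≤ b`, `b > 0`. -/
theorem stmt9 (hstar : ℝ → ℝ) (hconc : ConcaveOn ℝ (Ici (0 : ℝ)) hstar)
    (hmono : StrictMonoOn hstar (Ici (0 : ℝ)))
    (hnonneg : ∀ x : ℝ, 0 ≤ x → 0 ≤ hstar x)
    (htop : Tendsto hstar atTop atTop) (h1 : 1 ≤ hstar 0)
    (p q : ℝ) (hq : 0 < q) (hqp : q < p) (hp : p ≤ 2)
    (hδ0 : 0 < p / q - 1) (hδ1 : p / q - 1 < 1) :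
    ConcaveOn ℝ (Ici (0 : ℝ)) (fun x => hstar x ^ (p / q - 1)) ∧
    StrictMonoOn (fun x => hstar x ^ (p / q - 1)) (Ici (0 : ℝ)) ∧
    Tendsto (fun x => hstar x ^ (p / q - 1)) atTop atTop ∧
    (1 : ℝ) ≤ hstar 0 ^ (p / q - 1) ∧
    (∀ x : ℝ, 0 ≤ x → hstar x ^ (p / q - 1) ≤ hstar x) ∧
    (∀ a b : ℝ, 0 ≤ a → a ≤ b → 0 < b →
      a ^ (p / q) / b ^ (p / q) ≤
        (a * hstar a ^ (p / q - 1)) / (b * hstar b ^ (p / q - 1))) :=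
  stmt9_general hstar hconc hmono htop h1 p q hδ0 hδ1
end

section
/- Let 0 < q < p ≤ 2 and let Y be a random variable on a family of probability spaces (Ω, F, 𝒫) with lim_{m→∞} sup_{P∈𝒫} E_P(|Y|^q · 1{|Y|^q > m}) = 0. Then there exists a function φ̃(x) = x·h̃(x) on [0,∞) where h̃ diverges to ∞, satisfies a^{p/q}/b^{p/q} ≤ (a·h̃(a))/(b·h̃(b)) for all 0 ≤ a ≤ b with b > 0, and sup_{P∈𝒫} E_P[φ̃(|Y|^q)] < ∞. -/
/-!
Write `ε = p/q - 1` and `X = |Y|^q`. Each ramp `x ↦ min 1 ((x/M)^ε)` is nondecreasing, tends to `1`,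
and `x ↦ x^(-ε) min 1 ((x/M)^ε)` is nonincreasing; all three properties survive summation, and the
last one is exactly the ratio inequality for `x ↦ x h̃(x)`. Choosing the `n`-th scale as
`M_n = c_n 2^(n/ε)`, where `c_n` is a level beyond which every tail `E_P[X; X > c_n]` is below
`2^(-n)`, makes `E_P[X min 1 ((X/M_n)^ε)] ≤ E_P[X; X > c_n] + (c_n/M_n)^ε E_P[X] ≤ 2^(-n)(2 + c_0)`
for all `P` at once, and these bounds are summable.
-/

open MeasureTheory ProbabilityTheory Filter Set

noncomputable section

def truncRpow (ε M x : ℝ) : ℝ := min 1 ((x / M) ^ ε)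

/-- `max x 0` keeps `Real.rpow` away from negative bases, so the sum is monotone on all of `ℝ`. -/
def truncRpowSum (ε : ℝ) (M : ℕ → ℝ) (x : ℝ) : ℝ := ∑' n, truncRpow ε (M n) (max x 0)

def truncScale (ε : ℝ) (c : ℕ → ℝ) (n : ℕ) : ℝ := c n * (2 ^ n) ^ ε⁻¹

end

section TruncRpow

variable {ε M a b x y : ℝ}

lemma truncRpow_nonneg (hM : 0 ≤ M) (hx : 0 ≤ x) : 0 ≤ truncRpow ε M x :=
  le_min zero_le_one (Real.rpow_nonneg (div_nonneg hx hM) ε)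

lemma truncRpow_pos (hM : 0 < M) (hx : 0 < x) : 0 < truncRpow ε M x :=
  lt_min one_pos (Real.rpow_pos_of_pos (div_pos hx hM) ε)

lemma truncRpow_le_one : truncRpow ε M x ≤ 1 := min_le_left _ _

lemma truncRpow_le_rpow_div (hM : 0 ≤ M) (hx : 0 ≤ x) : truncRpow ε M x ≤ x ^ ε / M ^ ε :=
  (min_le_right _ _).trans_eq (Real.div_rpow hx hM ε)

lemma truncRpow_mono (hM : 0 ≤ M) (hε : 0 ≤ ε) (hx : 0 ≤ x) (hxy : x ≤ y) :
    truncRpow ε M x ≤ truncRpow ε M y :=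
  min_le_min le_rfl
    (Real.rpow_le_rpow (div_nonneg hx hM) (div_le_div_of_nonneg_right hxy hM) hε)

lemma truncRpow_eq_one (hM : 0 < M) (hε : 0 ≤ ε) (hx : M ≤ x) : truncRpow ε M x = 1 :=
  min_eq_left (Real.one_le_rpow ((one_le_div hM).2 hx) hε)

lemma rpow_mul_truncRpow_le (hM : 0 ≤ M) (hε : 0 ≤ ε) (ha : 0 ≤ a) (hab : a ≤ b) :
    a ^ ε * truncRpow ε M b ≤ b ^ ε * truncRpow ε M a := by
  have hb : 0 ≤ b := ha.trans hab
  rw [truncRpow, truncRpow, Real.div_rpow hb hM, Real.div_rpow ha hM,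
    mul_min_of_nonneg _ _ (Real.rpow_nonneg ha ε), mul_min_of_nonneg _ _ (Real.rpow_nonneg hb ε)]
  rw [mul_one, mul_one]
  exact min_le_min (Real.rpow_le_rpow ha hab hε) (mul_div_left_comm _ _ _).le

lemma measurable_truncRpow : Measurable (truncRpow ε M) := by
  unfold truncRpow
  fun_prop

end TruncRpow

section TruncRpowSum

variable {ε : ℝ} {M : ℕ → ℝ} {a b x : ℝ}

lemma truncRpowSum_of_nonneg (hx : 0 ≤ x) : truncRpowSum ε M x = ∑' n, truncRpow ε (M n) x := by
  rw [truncRpowSum, max_eq_left hx]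

lemma truncRpowSum_nonneg (hM : ∀ n, 0 ≤ M n) : 0 ≤ truncRpowSum ε M x :=
  tsum_nonneg fun n => truncRpow_nonneg (hM n) (le_max_right _ _)

variable (hM : ∀ n, 0 < M n) (hMsum : Summable fun n => (M n ^ ε)⁻¹)
include hM hMsum

lemma summable_truncRpow (hx : 0 ≤ x) : Summable fun n => truncRpow ε (M n) x :=
  Summable.of_nonneg_of_le (fun n => truncRpow_nonneg (hM n).le hx)
    (fun n => (truncRpow_le_rpow_div (hM n).le hx).trans_eq (div_eq_mul_inv _ _))
    (hMsum.mul_left (x ^ ε))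

lemma truncRpowSum_pos (hx : 0 < x) : 0 < truncRpowSum ε M x := by
  rw [truncRpowSum_of_nonneg hx.le]
  exact (summable_truncRpow hM hMsum hx.le).tsum_pos (fun n => truncRpow_nonneg (hM n).le hx.le) 0
    (truncRpow_pos (hM 0) hx)

lemma monotone_truncRpowSum (hε : 0 ≤ ε) : Monotone (truncRpowSum ε M) := fun _ _ hxy =>
  Summable.tsum_le_tsum
    (fun n => truncRpow_mono (hM n).le hε (le_max_right _ _) (max_le_max hxy le_rfl))
    (summable_truncRpow hM hMsum (le_max_right _ _)) (summable_truncRpow hM hMsum (le_max_right _ _))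

lemma tendsto_truncRpowSum_atTop (hε : 0 ≤ ε) : Tendsto (truncRpowSum ε M) atTop atTop := by
  refine tendsto_atTop.2 fun b => ?_
  obtain ⟨N, hN⟩ := exists_nat_ge b
  filter_upwards [eventually_ge_atTop 0,
    (Finset.range N).eventually_all.2 fun k _ => eventually_ge_atTop (M k)] with x hx hxM
  calc b ≤ N := hN
    _ = ∑ k ∈ Finset.range N, (1 : ℝ) := by simp
    _ = ∑ k ∈ Finset.range N, truncRpow ε (M k) x :=
      Finset.sum_congr rfl fun k hk => (truncRpow_eq_one (hM k) hε (hxM k hk)).symm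
    _ ≤ ∑' n, truncRpow ε (M n) x :=
      (summable_truncRpow hM hMsum hx).sum_le_tsum _ fun k _ => truncRpow_nonneg (hM k).le hx
    _ = truncRpowSum ε M x := (truncRpowSum_of_nonneg hx).symm

lemma rpow_mul_truncRpowSum_le (hε : 0 ≤ ε) (ha : 0 ≤ a) (hab : a ≤ b) :
    a ^ ε * truncRpowSum ε M b ≤ b ^ ε * truncRpowSum ε M a := by
  have hb : 0 ≤ b := ha.trans hab
  rw [truncRpowSum_of_nonneg ha, truncRpowSum_of_nonneg hb, ← tsum_mul_left, ← tsum_mul_left]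
  exact Summable.tsum_le_tsum (fun n => rpow_mul_truncRpow_le (hM n).le hε ha hab)
    ((summable_truncRpow hM hMsum hb).mul_left _) ((summable_truncRpow hM hMsum ha).mul_left _)

lemma rpow_div_rpow_le_mul_truncRpowSum_div (hε : 0 ≤ ε) (ha : 0 ≤ a) (hab : a ≤ b) (hb : 0 < b) :
    a ^ (1 + ε) / b ^ (1 + ε) ≤ a * truncRpowSum ε M a / (b * truncRpowSum ε M b) := by
  rcases ha.eq_or_lt with rfl | ha
  · simp [Real.zero_rpow (by positivity : 1 + ε ≠ 0)]
  have hhb := truncRpowSum_pos hM hMsum hb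
  rw [div_le_div_iff₀ (by positivity) (by positivity), Real.rpow_add ha, Real.rpow_add hb,
    Real.rpow_one, Real.rpow_one]
  calc a * a ^ ε * (b * truncRpowSum ε M b) = a * b * (a ^ ε * truncRpowSum ε M b) := by ring
    _ ≤ a * b * (b ^ ε * truncRpowSum ε M a) :=
      mul_le_mul_of_nonneg_left (rpow_mul_truncRpowSum_le hM hMsum hε ha.le hab) (by positivity)
    _ = a * truncRpowSum ε M a * (b * b ^ ε) := by ring

lemma ofReal_mul_truncRpowSum (hx : 0 ≤ x) :
    ENNReal.ofReal (x * truncRpowSum ε M x) = ∑' n, ENNReal.ofReal (x * truncRpow ε (M n) x) := by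
  rw [truncRpowSum_of_nonneg hx, ← tsum_mul_left]
  exact ENNReal.ofReal_tsum_of_nonneg (fun n => mul_nonneg hx (truncRpow_nonneg (hM n).le hx))
    ((summable_truncRpow hM hMsum hx).mul_left x)

end TruncRpowSum

section TruncScale

variable {ε : ℝ} {c : ℕ → ℝ} (hc : ∀ n, 1 ≤ c n)
include hc

lemma truncScale_pos (n : ℕ) : 0 < truncScale ε c n :=
  mul_pos (one_pos.trans_le (hc n)) (Real.rpow_pos_of_pos (by positivity) _)

lemma truncScale_rpow (hε : ε ≠ 0) (n : ℕ) : truncScale ε c n ^ ε = c n ^ ε * 2 ^ n := by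
  rw [truncScale, Real.mul_rpow (zero_le_one.trans (hc n)) (by positivity),
    Real.rpow_inv_rpow (by positivity) hε]

lemma div_truncScale_rpow (hε : ε ≠ 0) (n : ℕ) : (c n / truncScale ε c n) ^ ε = (1 / 2) ^ n := by
  have hcε : 0 < c n ^ ε := Real.rpow_pos_of_pos (one_pos.trans_le (hc n)) ε
  rw [Real.div_rpow (zero_le_one.trans (hc n)) (truncScale_pos hc n).le, truncScale_rpow hc hε,
    one_div_pow]
  field_simp

lemma summable_inv_truncScale_rpow (hε : 0 < ε) : Summable fun n => (truncScale ε c n ^ ε)⁻¹ := by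
  refine Summable.of_nonneg_of_le (fun n => inv_nonneg.2 (Real.rpow_nonneg (truncScale_pos hc n).le ε))
    (fun n => ?_) summable_geometric_two
  rw [truncScale_rpow hc hε.ne', one_div_pow, one_div]
  exact inv_anti₀ (by positivity)
    (le_mul_of_one_le_left (by positivity) (Real.one_le_rpow (hc n) hε.le))

end TruncScale

section Integral

variable {Ω : Type*} [MeasurableSpace Ω] {μ : Measure Ω} {X : Ω → ℝ}

lemma integral_le_add_setIntegral_lt [IsProbabilityMeasure μ] (hX : Measurable X)
    (hXi : Integrable X μ) {c : ℝ} (hc : 0 ≤ c) :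
    ∫ ω, X ω ∂μ ≤ c + ∫ ω in {ω | c < X ω}, X ω ∂μ := by
  have hs : MeasurableSet {ω | c < X ω} := measurableSet_lt measurable_const hX
  calc ∫ ω, X ω ∂μ ≤ ∫ ω, (c + {ω | c < X ω}.indicator X ω) ∂μ := by
        refine integral_mono hXi ((integrable_const c).add (hXi.indicator hs)) fun ω => ?_
        by_cases hω : c < X ω
        · simp [indicator_of_mem (show ω ∈ {ω | c < X ω} from hω), hc]
        · simp [hω, not_lt.1 hω]
    _ = c + ∫ ω in {ω | c < X ω}, X ω ∂μ := by
        rw [integral_add (integrable_const c) (hXi.indicator hs), integral_indicator hs]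
        simp

/-- Below the level `c` the ramp is at most `(c / M) ^ ε`; above it, at most `1`. -/
lemma lintegral_mul_truncRpow_le (hX : Measurable X) (hX0 : ∀ ω, 0 ≤ X ω)
    (hXi : Integrable X μ) {ε M c : ℝ} (hε : 0 ≤ ε) (hM : 0 < M) (hc : 0 ≤ c) :
    ∫⁻ ω, ENNReal.ofReal (X ω * truncRpow ε M (X ω)) ∂μ ≤
      ENNReal.ofReal (∫ ω in {ω | c < X ω}, X ω ∂μ + (c / M) ^ ε * ∫ ω, X ω ∂μ) := by
  have hs : MeasurableSet {ω | c < X ω} := measurableSet_lt measurable_const hX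
  have hbound : ∀ ω, X ω * truncRpow ε M (X ω) ≤
      {ω | c < X ω}.indicator X ω + (c / M) ^ ε * X ω := by
    intro ω
    have hcM : 0 ≤ (c / M) ^ ε := Real.rpow_nonneg (div_nonneg hc hM.le) ε
    by_cases hω : c < X ω
    · rw [indicator_of_mem (show ω ∈ {ω | c < X ω} from hω)]
      nlinarith [hX0 ω, truncRpow_le_one (ε := ε) (M := M) (x := X ω)]
    · rw [indicator_of_notMem (show ω ∉ {ω | c < X ω} from hω), zero_add, mul_comm _ (X ω)]
      refine mul_le_mul_of_nonneg_left ((min_le_right _ _).trans ?_) (hX0 ω)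
      exact Real.rpow_le_rpow (div_nonneg (hX0 ω) hM.le)
        (div_le_div_of_nonneg_right (not_lt.1 hω) hM.le) hε
  have hint : Integrable (fun ω => {ω | c < X ω}.indicator X ω + (c / M) ^ ε * X ω) μ :=
    (hXi.indicator hs).add (hXi.const_mul _)
  calc ∫⁻ ω, ENNReal.ofReal (X ω * truncRpow ε M (X ω)) ∂μ
      ≤ ∫⁻ ω, ENNReal.ofReal ({ω | c < X ω}.indicator X ω + (c / M) ^ ε * X ω) ∂μ :=
        lintegral_mono fun ω => ENNReal.ofReal_le_ofReal (hbound ω)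
    _ = ENNReal.ofReal (∫ ω, ({ω | c < X ω}.indicator X ω + (c / M) ^ ε * X ω) ∂μ) :=
        (ofReal_integral_eq_lintegral_ofReal hint (Eventually.of_forall fun ω =>
          add_nonneg (indicator_nonneg (fun ω _ => hX0 ω) ω)
            (mul_nonneg (Real.rpow_nonneg (div_nonneg hc hM.le) ε) (hX0 ω)))).symm
    _ = _ := by
        rw [integral_add (hXi.indicator hs) (hXi.const_mul _), integral_indicator hs,
          integral_const_mul]

lemma lintegral_mul_truncRpowSum_le [IsProbabilityMeasure μ] (hX : Measurable X)
    (hX0 : ∀ ω, 0 ≤ X ω) (hXi : Integrable X μ) {ε : ℝ} (hε : 0 < ε) {c : ℕ → ℝ}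
    (hc : ∀ n, 1 ≤ c n) (htail : ∀ n, ∫ ω in {ω | c n < X ω}, X ω ∂μ ≤ (1 / 2) ^ n) :
    ∫⁻ ω, ENNReal.ofReal (X ω * truncRpowSum ε (truncScale ε c) (X ω)) ∂μ ≤
      ENNReal.ofReal (2 * (2 + c 0)) := by
  have hM := truncScale_pos (ε := ε) hc
  have hMsum := summable_inv_truncScale_rpow hc hε
  have hmean : ∫ ω, X ω ∂μ ≤ c 0 + 1 := by
    have := htail 0
    rw [pow_zero] at this
    linarith [integral_le_add_setIntegral_lt hX hXi (zero_le_one.trans (hc 0))]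
  have hterm : ∀ n, ∫⁻ ω, ENNReal.ofReal (X ω * truncRpow ε (truncScale ε c n) (X ω)) ∂μ ≤
      ENNReal.ofReal ((1 / 2) ^ n * (2 + c 0)) := by
    intro n
    refine (lintegral_mul_truncRpow_le hX hX0 hXi hε.le (hM n) (zero_le_one.trans (hc n))).trans
      (ENNReal.ofReal_le_ofReal ?_)
    rw [div_truncScale_rpow hc hε.ne']
    nlinarith [htail n, pow_pos (by norm_num : (0 : ℝ) < 1 / 2) n]
  calc ∫⁻ ω, ENNReal.ofReal (X ω * truncRpowSum ε (truncScale ε c) (X ω)) ∂μ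
      = ∫⁻ ω, ∑' n, ENNReal.ofReal (X ω * truncRpow ε (truncScale ε c n) (X ω)) ∂μ :=
        lintegral_congr fun ω => ofReal_mul_truncRpowSum hM hMsum (hX0 ω)
    _ = ∑' n, ∫⁻ ω, ENNReal.ofReal (X ω * truncRpow ε (truncScale ε c n) (X ω)) ∂μ :=
        lintegral_tsum fun n => (hX.mul (measurable_truncRpow.comp hX)).ennreal_ofReal.aemeasurable
    _ ≤ ∑' n, ENNReal.ofReal ((1 / 2) ^ n * (2 + c 0)) := ENNReal.tsum_le_tsum hterm
    _ = ENNReal.ofReal (2 * (2 + c 0)) := by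
        rw [← ENNReal.ofReal_tsum_of_nonneg
          (fun n => mul_nonneg (by positivity) (by linarith [hc 0]))
          (summable_geometric_two.mul_right _), tsum_mul_right, tsum_geometric_two]

end Integral

theorem stmt10_general {Ω : Type*} [MeasurableSpace Ω] (Ps : Set (Measure Ω))
    (hPs : ∀ P ∈ Ps, IsProbabilityMeasure P)
    (Y : Ω → ℝ) (hY : Measurable Y) (p q : ℝ) (hq : 0 < q) (hqp : q < p)
    (hint : ∀ P ∈ Ps, Integrable (fun ω => |Y ω| ^ q) P)
    (hUI : ∀ ε : ℝ, 0 < ε → ∃ M : ℕ, ∀ m ≥ M, ∀ P ∈ Ps,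
      ∫ ω in {ω | (m : ℝ) < |Y ω| ^ q}, |Y ω| ^ q ∂P < ε) :
    ∃ htil : ℝ → ℝ, Measurable htil ∧ (∀ x : ℝ, 0 ≤ x → 0 ≤ htil x) ∧
      Tendsto htil atTop atTop ∧
      (∀ a b : ℝ, 0 ≤ a → a ≤ b → 0 < b →
        a ^ (p / q) / b ^ (p / q) ≤ (a * htil a) / (b * htil b)) ∧
      ∃ C : ℝ, ∀ P ∈ Ps,
        ∫⁻ ω, ENNReal.ofReal (|Y ω| ^ q * htil (|Y ω| ^ q)) ∂P ≤ ENNReal.ofReal C := by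
  obtain ⟨ε, hε, hpq⟩ : ∃ ε : ℝ, 0 < ε ∧ p / q = 1 + ε :=
    ⟨p / q - 1, sub_pos.2 ((one_lt_div hq).2 hqp), by ring⟩
  choose cut hcut using fun n : ℕ => hUI ((1 / 2) ^ n) (by positivity)
  set c : ℕ → ℝ := fun n => ((cut n + 1 : ℕ) : ℝ)
  have hc : ∀ n, 1 ≤ c n := fun n => by simp [c]
  have hM := truncScale_pos (ε := ε) hc
  have hMsum := summable_inv_truncScale_rpow hc hε
  refine ⟨truncRpowSum ε (truncScale ε c), (monotone_truncRpowSum hM hMsum hε.le).measurable,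
    fun x _ => truncRpowSum_nonneg fun n => (hM n).le, tendsto_truncRpowSum_atTop hM hMsum hε.le,
    fun a b ha hab hb => ?_, 2 * (2 + c 0), fun P hP => ?_⟩
  · rw [hpq]
    exact rpow_div_rpow_le_mul_truncRpowSum_div hM hMsum hε.le ha hab hb
  · have := hPs P hP
    exact lintegral_mul_truncRpowSum_le (by fun_prop) (fun ω => by positivity) (hint P hP) hε hc
      fun n => (hcut n _ (Nat.le_succ _) P hP).le

/-- If the (uncentered) q-th moment of `Y` is Ps-uniformly integrable and `0 < q < p ≤ 2`, then
there exists `φ̃(x) = x · h̃(x)` with `h̃` diverging to ∞, satisfying the ratio inequality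
`a^(p/q)/b^(p/q) ≤ (a h̃ a)/(b h̃ b)`, and with `sup_{P∈Ps} E_P[φ̃(|Y|^q)] < ∞`. -/
theorem stmt10 {Ω : Type*} [MeasurableSpace Ω] (Ps : Set (Measure Ω))
    (hPs : ∀ P ∈ Ps, IsProbabilityMeasure P)
    (Y : Ω → ℝ) (hY : Measurable Y) (p q : ℝ) (hq : 0 < q) (hqp : q < p) (hp : p ≤ 2)
    (hint : ∀ P ∈ Ps, Integrable (fun ω => |Y ω| ^ q) P)
    (hUI : ∀ ε : ℝ, 0 < ε → ∃ M : ℕ, ∀ m ≥ M, ∀ P ∈ Ps,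
      ∫ ω in {ω | (m : ℝ) < |Y ω| ^ q}, |Y ω| ^ q ∂P < ε) :
    ∃ htil : ℝ → ℝ, Measurable htil ∧ (∀ x : ℝ, 0 ≤ x → 0 ≤ htil x) ∧
      Tendsto htil atTop atTop ∧
      (∀ a b : ℝ, 0 ≤ a → a ≤ b → 0 < b →
        a ^ (p / q) / b ^ (p / q) ≤ (a * htil a) / (b * htil b)) ∧
      ∃ C : ℝ, ∀ P ∈ Ps,
        ∫⁻ ω, ENNReal.ofReal (|Y ω| ^ q * htil (|Y ω| ^ q)) ∂P ≤ ENNReal.ofReal C :=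
  stmt10_general Ps hPs Y hY p q hq hqp hint hUI
end

section
/- Let Y be a random variable on (Ω, F) with E_P|Y| < ∞ for every P in a family 𝒫. Then Y is 𝒫-uniformly integrable (i.e., lim_{m→∞} sup_{P∈𝒫} E_P(|Y|·1{|Y| ≥ m}) = 0) if and only if there exists a measurable function h : [0,∞) → [0,∞) that is concave, strictly increasing, with h(0) = 0 and h(x) → ∞ as x → ∞, such that sup_{P∈𝒫} E_P[|Y|·h(|Y|)] < ∞. -/
open MeasureTheory ProbabilityTheory Filter Set Topology

/-!
Choose levels `r k ≥ 2 ^ k` beyond which the tails `E_P[|Y|; |Y| ≥ r k]` are at most `2⁻ᵏ`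
uniformly in `P`, and take `h x = ∑ₖ min x (r k ²) / r k ²`, a convergent sum of concave ramps
which is strictly increasing and unbounded. Since `x · min x r² / r² ≤ x · 1{x ≥ r} + x / r`,
`E_P[|Y| h |Y|] ≤ ∑ₖ 2⁻ᵏ (1 + E_P|Y|)`, and `E_P|Y| ≤ r 0 + 1`. Conversely, if `h ≥ K` on
`[m, ∞)` then `K · E_P[|Y|; |Y| ≥ m] ≤ E_P[|Y| h |Y|] ≤ C`.
-/

theorem ConcaveOn.tsum {ι E : Type*} [AddCommMonoid E] [Module ℝ E] {s : Set E}
    {f : ι → E → ℝ} (hs : Convex ℝ s) (hf : ∀ i, ConcaveOn ℝ s (f i))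
    (hsum : ∀ x ∈ s, Summable fun i => f i x) : ConcaveOn ℝ s fun x => ∑' i, f i x := by
  refine ⟨hs, fun x hx y hy a b ha hb hab => ?_⟩
  simp only [smul_eq_mul]
  rw [← tsum_mul_left, ← tsum_mul_left,
    ← ((hsum x hx).mul_left a).tsum_add ((hsum y hy).mul_left b)]
  exact Summable.tsum_le_tsum (fun i => (hf i).2 hx hy ha hb hab)
    (((hsum x hx).mul_left a).add ((hsum y hy).mul_left b)) (hsum _ (hs hx hy ha hb hab))

theorem tendsto_atTop_of_summable_inv {c : ℕ → ℝ} (hc : ∀ k, 0 < c k)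
    (hsum : Summable fun k => (c k)⁻¹) : Tendsto c atTop atTop := by
  have h : Tendsto (fun k => (c k)⁻¹) atTop (𝓝[>] 0) :=
    tendsto_nhdsWithin_iff.2 ⟨hsum.tendsto_atTop_zero, .of_forall fun k => inv_pos.2 (hc k)⟩
  simpa only [Pi.inv_def, inv_inv] using h.inv_tendsto_nhdsGT_zero

noncomputable def rampSum (c : ℕ → ℝ) (x : ℝ) : ℝ := ∑' k, min x (c k) / c k

section

variable {c : ℕ → ℝ}

theorem rampSum_zero (hc : ∀ k, 0 ≤ c k) : rampSum c 0 = 0 := by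
  simp [rampSum, hc]

theorem summable_min_div (hc : ∀ k, 0 < c k) (hsum : Summable fun k => (c k)⁻¹)
    (x : ℝ) : Summable fun k => min x (c k) / c k := by
  refine (hsum.mul_left |x|).of_norm_bounded fun k => ?_
  have hmin : |min x (c k)| ≤ |x| := by
    rcases le_total x (c k) with h | h
    · rw [min_eq_left h]
    · rw [min_eq_right h, abs_of_pos (hc k)]
      exact h.trans (le_abs_self x)
  rw [Real.norm_eq_abs, abs_div, abs_of_pos (hc k), div_eq_mul_inv]
  exact mul_le_mul_of_nonneg_right hmin (inv_nonneg.2 (hc k).le)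

theorem concaveOn_rampSum (hc : ∀ k, 0 < c k) (hsum : Summable fun k => (c k)⁻¹) :
    ConcaveOn ℝ univ (rampSum c) := by
  refine ConcaveOn.tsum convex_univ (fun k => ?_) fun x _ => summable_min_div hc hsum x
  simpa [div_eq_inv_mul] using
    ((concaveOn_id convex_univ).inf (concaveOn_const (c k) convex_univ)).smul
      (inv_nonneg.2 (hc k).le)

theorem strictMono_rampSum (hc : ∀ k, 0 < c k) (hsum : Summable fun k => (c k)⁻¹) :
    StrictMono (rampSum c) := by
  intro a b hab
  obtain ⟨k, hk⟩ := ((tendsto_atTop_of_summable_inv hc hsum).eventually_ge_atTop b).exists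
  refine Summable.tsum_lt_tsum (i := k) (fun j => ?_) ?_ (summable_min_div hc hsum a)
    (summable_min_div hc hsum b)
  · exact div_le_div_of_nonneg_right (min_le_min_right _ hab.le) (hc j).le
  · rw [min_eq_left (hab.le.trans hk), min_eq_left hk]
    exact div_lt_div_of_pos_right hab (hc k)

theorem tendsto_rampSum_atTop (hc : ∀ k, 0 < c k) (hsum : Summable fun k => (c k)⁻¹) :
    Tendsto (rampSum c) atTop atTop := by
  refine tendsto_atTop_atTop.2 fun b => ⟨∑ k ∈ Finset.range ⌈b⌉₊, c k, fun x hx => ?_⟩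
  have hx0 : 0 ≤ x := (Finset.sum_nonneg fun k _ => (hc k).le).trans hx
  have hone : ∀ k ∈ Finset.range ⌈b⌉₊, min x (c k) / c k = 1 := fun k hk => by
    rw [min_eq_right ((Finset.single_le_sum (fun j _ => (hc j).le) hk).trans hx),
      div_self (hc k).ne']
  calc b ≤ ⌈b⌉₊ := Nat.le_ceil b
    _ = ∑ k ∈ Finset.range ⌈b⌉₊, min x (c k) / c k := by simp [Finset.sum_congr rfl hone]
    _ ≤ rampSum c x := (summable_min_div hc hsum x).sum_le_tsum _
          fun k _ => div_nonneg (le_min hx0 (hc k).le) (hc k).le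

end

theorem summable_inv_sq_of_two_pow_le {r : ℕ → ℝ} (hr : ∀ k, 2 ^ k ≤ r k) :
    Summable fun k => (r k ^ 2)⁻¹ := by
  refine (summable_geometric_of_lt_one (r := 4⁻¹) (by norm_num) (by norm_num)).of_nonneg_of_le
    (fun k => inv_nonneg.2 (sq_nonneg _)) fun k => ?_
  calc (r k ^ 2)⁻¹ ≤ ((2 ^ k) ^ 2)⁻¹ :=
        inv_anti₀ (by positivity) (pow_le_pow_left₀ (by positivity) (hr k) 2)
    _ = 4⁻¹ ^ k := by rw [← pow_mul, mul_comm, pow_mul, inv_pow]; norm_num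

theorem ofReal_mul_min_sq_div_sq_le {x r : ℝ} (hx : 0 ≤ x) (hr : 0 < r) :
    ENNReal.ofReal (x * (min x (r ^ 2) / r ^ 2)) ≤
      (if r ≤ x then ENNReal.ofReal x else 0) + ENNReal.ofReal r⁻¹ * ENNReal.ofReal x := by
  split_ifs with h
  · refine ENNReal.ofReal_le_ofReal (mul_le_of_le_one_right hx ?_) |>.trans le_self_add
    exact div_le_one_of_le₀ (min_le_right _ _) (by positivity)
  · rw [zero_add, ← ENNReal.ofReal_mul (inv_nonneg.2 hr.le)]
    refine ENNReal.ofReal_le_ofReal ?_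
    calc x * (min x (r ^ 2) / r ^ 2) ≤ x * (r / r ^ 2) := by
          gcongr
          exact (min_le_left _ _).trans (not_le.1 h).le
      _ = r⁻¹ * x := by field_simp

theorem lintegral_ofReal_le_mul_add_setLIntegral {Ω : Type*} [MeasurableSpace Ω]
    (μ : Measure Ω) {X : Ω → ℝ} (hX : Measurable X) (m : ℝ) :
    ∫⁻ ω, ENNReal.ofReal (X ω) ∂μ ≤
      ENNReal.ofReal m * μ univ + ∫⁻ ω in {ω | m ≤ X ω}, ENNReal.ofReal (X ω) ∂μ := by
  rw [← lintegral_add_compl _ (measurableSet_le measurable_const hX), add_comm]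
  gcongr
  calc ∫⁻ ω in {ω | m ≤ X ω}ᶜ, ENNReal.ofReal (X ω) ∂μ
      ≤ ∫⁻ _ in {ω | m ≤ X ω}ᶜ, ENNReal.ofReal m ∂μ :=
        setLIntegral_mono measurable_const fun ω hω => ENNReal.ofReal_le_ofReal (le_of_not_ge hω)
    _ ≤ ENNReal.ofReal m * μ univ := by
        rw [setLIntegral_const]
        gcongr
        exact subset_univ _

section

variable {Ω : Type*} [MeasurableSpace Ω] (μ : Measure Ω) {X : Ω → ℝ}

theorem lintegral_mul_rampSum_sq_le (hX : Measurable X) (hX0 : ∀ ω, 0 ≤ X ω) {r : ℕ → ℝ}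
    (hr : ∀ k, 0 < r k) (hsum : Summable fun k => (r k ^ 2)⁻¹) :
    ∫⁻ ω, ENNReal.ofReal (X ω * rampSum (fun k => r k ^ 2) (X ω)) ∂μ ≤
      ∑' k, (∫⁻ ω in {ω | r k ≤ X ω}, ENNReal.ofReal (X ω) ∂μ +
        ENNReal.ofReal (r k)⁻¹ * ∫⁻ ω, ENNReal.ofReal (X ω) ∂μ) := by
  have hc : ∀ k, 0 < r k ^ 2 := fun k => pow_pos (hr k) 2
  have hpt : ∀ ω, ENNReal.ofReal (X ω * rampSum (fun k => r k ^ 2) (X ω)) ≤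
      ∑' k, ({ω | r k ≤ X ω}.indicator (fun ω => ENNReal.ofReal (X ω)) ω +
        ENNReal.ofReal (r k)⁻¹ * ENNReal.ofReal (X ω)) := fun ω => by
    rw [rampSum, ← tsum_mul_left, ENNReal.ofReal_tsum_of_nonneg
      (fun k => mul_nonneg (hX0 ω) (div_nonneg (le_min (hX0 ω) (hc k).le) (hc k).le))
      ((summable_min_div hc hsum _).mul_left _)]
    exact ENNReal.tsum_le_tsum fun k => by
      simpa only [indicator_apply, mem_ofPred_eq] using
        ofReal_mul_min_sq_div_sq_le (hX0 ω) (hr k)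
  have hmeas : ∀ k, Measurable ({ω | r k ≤ X ω}.indicator fun ω => ENNReal.ofReal (X ω)) :=
    fun k => hX.ennreal_ofReal.indicator (measurableSet_le measurable_const hX)
  calc _ ≤ _ := lintegral_mono hpt
    _ = _ := lintegral_tsum fun k => ((hmeas k).add (hX.ennreal_ofReal.const_mul _)).aemeasurable
    _ = _ := by
      congr 1
      ext k
      rw [lintegral_add_left (hmeas k), lintegral_indicator (measurableSet_le measurable_const hX),
        lintegral_const_mul _ hX.ennreal_ofReal]

theorem lintegral_mul_rampSum_sq_le_of_tail [IsProbabilityMeasure μ] (hX : Measurable X)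
    (hX0 : ∀ ω, 0 ≤ X ω) {r : ℕ → ℝ} (hr : ∀ k, 2 ^ k ≤ r k)
    (htail : ∀ k, ∫⁻ ω in {ω | r k ≤ X ω}, ENNReal.ofReal (X ω) ∂μ ≤ 2⁻¹ ^ k) :
    ∫⁻ ω, ENNReal.ofReal (X ω * rampSum (fun k => r k ^ 2) (X ω)) ∂μ ≤
      2 * (ENNReal.ofReal (r 0) + 2) := by
  have hr0 : ∀ k, 0 < r k := fun k => (pow_pos two_pos k).trans_le (hr k)
  have hinv : ∀ k, ENNReal.ofReal (r k)⁻¹ ≤ 2⁻¹ ^ k := fun k => by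
    rw [← ENNReal.ofReal_ofNat 2, ← ENNReal.ofReal_inv_of_pos two_pos,
      ← ENNReal.ofReal_pow (by norm_num), inv_pow]
    exact ENNReal.ofReal_le_ofReal (inv_anti₀ (by positivity) (hr k))
  have hmean : ∫⁻ ω, ENNReal.ofReal (X ω) ∂μ ≤ ENNReal.ofReal (r 0) + 1 := by
    simpa using lintegral_ofReal_le_mul_add_setLIntegral μ hX (r 0) |>.trans
      (add_le_add_right (htail 0) _)
  calc _ ≤ _ :=
      lintegral_mul_rampSum_sq_le μ hX hX0 hr0 (summable_inv_sq_of_two_pow_le hr)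
    _ ≤ ∑' k, 2⁻¹ ^ k * (ENNReal.ofReal (r 0) + 2) := ENNReal.tsum_le_tsum fun k => by
      calc _ ≤ 2⁻¹ ^ k + 2⁻¹ ^ k * (ENNReal.ofReal (r 0) + 1) :=
          add_le_add (htail k) (mul_le_mul' (hinv k) hmean)
        _ = _ := by ring
    _ = 2 * (ENNReal.ofReal (r 0) + 2) := by
      rw [ENNReal.tsum_mul_right, ENNReal.tsum_geometric, ENNReal.one_sub_inv_two, inv_inv]

end

theorem ofReal_mul_setLIntegral_le_lintegral_mul {Ω : Type*} [MeasurableSpace Ω]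
    (μ : Measure Ω) {X : Ω → ℝ} (hX : Measurable X) (hX0 : ∀ ω, 0 ≤ X ω) {g : ℝ → ℝ}
    {K m : ℝ} (hK : 0 ≤ K) (hg : ∀ x, m ≤ x → K ≤ g x) :
    ENNReal.ofReal K * ∫⁻ ω in {ω | m ≤ X ω}, ENNReal.ofReal (X ω) ∂μ ≤
      ∫⁻ ω, ENNReal.ofReal (X ω * g (X ω)) ∂μ := by
  rw [← lintegral_const_mul' _ _ ENNReal.ofReal_ne_top]
  refine (setLIntegral_mono' (measurableSet_le measurable_const hX) fun ω hω => ?_).trans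
    (setLIntegral_le_lintegral _ _)
  rw [← ENNReal.ofReal_mul hK, mul_comm]
  exact ENNReal.ofReal_le_ofReal (mul_le_mul_of_nonneg_left (hg _ hω) (hX0 ω))

theorem exists_two_pow_le_tail_le {Ω : Type*} [MeasurableSpace Ω] {Ps : Set (Measure Ω)}
    {Y : Ω → ℝ} (hint : ∀ P ∈ Ps, Integrable Y P)
    (hui : ∀ ε : ℝ, 0 < ε → ∃ M : ℕ, ∀ m ≥ M, ∀ P ∈ Ps,
      ∫ ω in {ω | (m : ℝ) ≤ |Y ω|}, |Y ω| ∂P < ε) :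
    ∃ r : ℕ → ℝ, (∀ k, 2 ^ k ≤ r k) ∧
      ∀ k, ∀ P ∈ Ps, ∫⁻ ω in {ω | r k ≤ |Y ω|}, ENNReal.ofReal |Y ω| ∂P ≤ 2⁻¹ ^ k := by
  choose M hM using fun k : ℕ => hui (2⁻¹ ^ k) (by positivity)
  refine ⟨fun k => (max (M k) (2 ^ k) : ℕ), fun k => by push_cast; exact le_max_right _ _,
    fun k P hP => ?_⟩
  rw [← ofReal_integral_eq_lintegral_ofReal (hint P hP).abs.restrict
    (ae_of_all _ fun _ => abs_nonneg _)]
  calc _ ≤ ENNReal.ofReal (2⁻¹ ^ k) :=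
        ENNReal.ofReal_le_ofReal (hM k _ (le_max_left _ _) P hP).le
    _ = 2⁻¹ ^ k := by
      rw [ENNReal.ofReal_pow (by norm_num), ENNReal.ofReal_inv_of_pos two_pos,
        ENNReal.ofReal_ofNat]

/-- De la Vallée Poussin criterion, refined: `Y` (integrable under every `P ∈ Ps`) is
Ps-uniformly integrable iff there is a measurable `h : [0,∞) → [0,∞)` that is concave, strictly
increasing, with `h 0 = 0`, `h → ∞`, and `sup_{P∈Ps} E_P[|Y| h(|Y|)] < ∞`. -/
theorem stmt11 {Ω : Type*} [MeasurableSpace Ω] (Ps : Set (Measure Ω))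
    (hPs : ∀ P ∈ Ps, IsProbabilityMeasure P)
    (Y : Ω → ℝ) (hY : Measurable Y)
    (hint : ∀ P ∈ Ps, Integrable Y P) :
    (∀ ε : ℝ, 0 < ε → ∃ M : ℕ, ∀ m ≥ M, ∀ P ∈ Ps,
        ∫ ω in {ω | (m : ℝ) ≤ |Y ω|}, |Y ω| ∂P < ε) ↔
      ∃ h : ℝ → ℝ, Measurable h ∧ ConcaveOn ℝ (Ici (0 : ℝ)) h ∧
        StrictMonoOn h (Ici (0 : ℝ)) ∧ (∀ x : ℝ, 0 ≤ x → 0 ≤ h x) ∧ h 0 = 0 ∧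
        Tendsto h atTop atTop ∧
        ∃ C : ℝ, ∀ P ∈ Ps,
          ∫⁻ ω, ENNReal.ofReal (|Y ω| * h |Y ω|) ∂P ≤ ENNReal.ofReal C := by
  constructor
  · intro hui
    obtain ⟨r, hr, htail⟩ := exists_two_pow_le_tail_le hint hui
    have hc : ∀ k, 0 < r k ^ 2 := fun k => pow_pos ((pow_pos two_pos k).trans_le (hr k)) 2
    have hsum := summable_inv_sq_of_two_pow_le hr
    have hmono := strictMono_rampSum hc hsum
    refine ⟨_, hmono.monotone.measurable,
      (concaveOn_rampSum hc hsum).subset (subset_univ _) (convex_Ici 0), hmono.strictMonoOn _,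
      fun x hx => ?_, rampSum_zero fun k => (hc k).le, tendsto_rampSum_atTop hc hsum,
      (2 * (ENNReal.ofReal (r 0) + 2)).toReal, fun P hP => ?_⟩
    · exact rampSum_zero (fun k => (hc k).le) ▸ hmono.monotone hx
    · have := hPs P hP
      rw [ENNReal.ofReal_toReal (by finiteness)]
      exact lintegral_mul_rampSum_sq_le_of_tail P hY.abs (fun ω => abs_nonneg _) hr
        fun k => htail k P hP
  · rintro ⟨h, -, -, -, -, -, htop, C, hC⟩ ε hε
    set K := (|C| + 1) / ε
    obtain ⟨x₀, hx₀⟩ := (htop.eventually_ge_atTop K).exists_forall_of_atTop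
    refine ⟨⌈x₀⌉₊, fun m hm P hP => ?_⟩
    have hKh : ∀ x, (m : ℝ) ≤ x → K ≤ h x :=
      fun x hx => hx₀ x ((Nat.le_ceil x₀).trans ((Nat.cast_le.2 hm).trans hx))
    have key := (ofReal_mul_setLIntegral_le_lintegral_mul P hY.abs (fun ω => abs_nonneg _)
      (by positivity) hKh).trans (hC P hP)
    rw [← ofReal_integral_eq_lintegral_ofReal (hint P hP).abs.restrict
      (ae_of_all _ fun _ => abs_nonneg _), ← ENNReal.ofReal_mul (by positivity),
      ENNReal.ofReal_le_ofReal_iff'] at key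
    have hKε : K * ε = |C| + 1 := div_mul_cancel₀ _ hε.ne'
    by_contra! hge
    have := mul_le_mul_of_nonneg_left hge (by positivity : 0 ≤ K)
    rcases key with key | key <;> linarith [le_abs_self C, abs_nonneg C]
end

section
/- Let (X_n) be independent random variables under each P in a family 𝒫, and suppose for some q ∈ [1,2] and a positive nondecreasing sequence a_n ↗ ∞: sup_{P∈𝒫} Σ_{k=1}^∞ E_P|X_k − E_P X_k|^q / a_k^q < ∞ and lim_{m→∞} sup_{P∈𝒫} Σ_{k=m}^∞ E_P|X_k − E_P X_k|^q / a_k^q = 0. Then for every ε > 0, lim_{m→∞} sup_{P∈𝒫} P( sup_{k ≥ m} |(1/a_k) Σ_{i=1}^k (X_i − E_P X_i)| ≥ ε ) = 0. -/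
/-!
Centre the variables, `Y i = X i - 𝔼[X i]`, and let `S k = Y 1 + ⋯ + Y k`. With `g` the derivative
of `|·| ^ q`, the pointwise inequality `|x + y| ^ q ≤ |x| ^ q + g x * y + 4 |y| ^ q` (`1 ≤ q ≤ 2`)
integrates against an independent mean-zero `y` to the von Bahr–Esseen bound
`𝔼|∑ Y i| ^ q ≤ 4 ∑ 𝔼|Y i| ^ q`, and the tangent inequality `|x| ^ q + g x * y ≤ |x + y| ^ q` makes
`|partial sums| ^ q` a submartingale, so Doob's maximal inequality bounds their running maximum.
For `k ≥ m`, summation by parts gives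
`|S k| / a k ≤ |S m| / a m + 2 sup_j |∑_{m < i ≤ j} Y i / a i|`.
The first term is small uniformly in `P` because the head `∑_{i ≤ N} 𝔼|Y i| ^ q` is uniformly
bounded while `a m → ∞`, the second because the tails of `∑ 𝔼|Y i| ^ q / a i ^ q` vanish uniformly.
-/

open MeasureTheory ProbabilityTheory Filter Finset
open scoped NNReal ENNReal

lemma Real.measurable_sign : Measurable Real.sign :=
  Measurable.ite (measurableSet_lt measurable_id measurable_const) measurable_const
    (Measurable.ite (measurableSet_lt measurable_const measurable_id) measurable_const
      measurable_const)

lemma Real.abs_rpow_sub_one_mul_abs {q : ℝ} (hq : q ≠ 0) (x : ℝ) :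
    |x| ^ (q - 1) * |x| = |x| ^ q := by
  rw [← Real.rpow_add_one' (abs_nonneg x) (by simpa using hq), sub_add_cancel]

lemma Real.abs_rpow_sub_rpow_le {r u v : ℝ} (hr0 : 0 ≤ r) (hr1 : r ≤ 1) (hu : 0 ≤ u)
    (hv : 0 ≤ v) : |u ^ r - v ^ r| ≤ |u - v| ^ r := by
  wlog hvu : v ≤ u generalizing u v
  · rw [abs_sub_comm, abs_sub_comm u]
    exact this hv hu (le_of_not_ge hvu)
  have hsub : u ^ r ≤ v ^ r + (u - v) ^ r := by
    simpa using Real.rpow_add_le_add_rpow hv (sub_nonneg.2 hvu) hr0 hr1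
  rw [abs_of_nonneg (sub_nonneg.2 (Real.rpow_le_rpow hv hvu hr0)),
    abs_of_nonneg (sub_nonneg.2 hvu)]
  linarith

/-- The derivative of `x ↦ |x| ^ q`; at `x = 0` its value `0` is a subgradient also for `q = 1`. -/
noncomputable def absRpowDeriv (q x : ℝ) : ℝ := q * Real.sign x * |x| ^ (q - 1)

lemma measurable_absRpowDeriv (q : ℝ) : Measurable (absRpowDeriv q) :=
  (measurable_const.mul Real.measurable_sign).mul (measurable_id.abs.pow_const _)

lemma absRpowDeriv_neg (q x : ℝ) : absRpowDeriv q (-x) = -absRpowDeriv q x := by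
  simp [absRpowDeriv, Real.sign_neg]

lemma absRpowDeriv_of_pos {q x : ℝ} (hx : 0 < x) : absRpowDeriv q x = q * x ^ (q - 1) := by
  simp [absRpowDeriv, Real.sign_of_pos hx, abs_of_pos hx]

lemma absRpowDeriv_mul_self {q : ℝ} (hq : q ≠ 0) (x : ℝ) :
    absRpowDeriv q x * x = q * |x| ^ q := by
  rw [← Real.abs_rpow_sub_one_mul_abs hq]
  rcases lt_trichotomy x 0 with hx | rfl | hx
  · rw [absRpowDeriv, Real.sign_of_neg hx, abs_of_neg hx]; ring
  · simp [absRpowDeriv]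
  · rw [absRpowDeriv, Real.sign_of_pos hx, abs_of_pos hx]; ring

lemma abs_absRpowDeriv_le {q : ℝ} (hq : 0 ≤ q) (x : ℝ) :
    |absRpowDeriv q x| ≤ q * |x| ^ (q - 1) := by
  have hsign : |Real.sign x| ≤ 1 := by
    rcases Real.sign_apply_eq x with h | h | h <;> simp [h]
  rw [absRpowDeriv, abs_mul, abs_mul, abs_of_nonneg hq,
    abs_of_nonneg (Real.rpow_nonneg (abs_nonneg x) _)]
  exact mul_le_mul_of_nonneg_right (mul_le_of_le_one_right hq hsign)
    (Real.rpow_nonneg (abs_nonneg x) _)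

lemma abs_absRpowDeriv_le_one_add {q : ℝ} (hq : 1 ≤ q) (x : ℝ) :
    |absRpowDeriv q x| ≤ q * (1 + |x| ^ q) := by
  refine (abs_absRpowDeriv_le (by linarith) x).trans (mul_le_mul_of_nonneg_left ?_ (by linarith))
  rcases le_total |x| 1 with h | h
  · linarith [Real.rpow_le_one (abs_nonneg x) h (by linarith : 0 ≤ q - 1),
      Real.rpow_nonneg (abs_nonneg x) q]
  · linarith [Real.rpow_le_rpow_of_exponent_le h (by linarith : q - 1 ≤ q)]

/-- Weighted AM-GM with weights `(q - 1) / q` and `1 / q`. -/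
lemma mul_abs_rpow_sub_one_mul_abs_le {q : ℝ} (hq : 1 ≤ q) (x z : ℝ) :
    q * (|x| ^ (q - 1) * |z|) ≤ (q - 1) * |x| ^ q + |z| ^ q := by
  have hq0 : 0 < q := by linarith
  have h := Real.geom_mean_le_arith_mean2_weighted (div_nonneg (sub_nonneg.2 hq) hq0.le)
    (one_div_nonneg.2 hq0.le) (Real.rpow_nonneg (abs_nonneg x) q)
    (Real.rpow_nonneg (abs_nonneg z) q) (by field_simp; ring)
  rw [← Real.rpow_mul (abs_nonneg x), ← Real.rpow_mul (abs_nonneg z),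
    mul_div_cancel₀ _ hq0.ne', mul_one_div_cancel hq0.ne', Real.rpow_one] at h
  have := mul_le_mul_of_nonneg_left h hq0.le
  field_simp at this
  linarith

lemma abs_rpow_add_absRpowDeriv_mul_le {q : ℝ} (hq : 1 ≤ q) (x y : ℝ) :
    |x| ^ q + absRpowDeriv q x * y ≤ |x + y| ^ q := by
  have hxy : absRpowDeriv q x * (x + y) ≤ q * (|x| ^ (q - 1) * |x + y|) := by
    calc absRpowDeriv q x * (x + y) ≤ |absRpowDeriv q x| * |x + y| := by
          rw [← abs_mul]; exact le_abs_self _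
      _ ≤ q * |x| ^ (q - 1) * |x + y| :=
          mul_le_mul_of_nonneg_right (abs_absRpowDeriv_le (by linarith) x) (abs_nonneg _)
      _ = _ := mul_assoc _ _ _
  have hx := absRpowDeriv_mul_self (by linarith : q ≠ 0) x
  have := mul_abs_rpow_sub_one_mul_abs_le hq x (x + y)
  linarith [show absRpowDeriv q x * y = absRpowDeriv q x * (x + y) - absRpowDeriv q x * x by ring]

lemma abs_absRpowDeriv_sub_le {q : ℝ} (hq1 : 1 ≤ q) (hq2 : q ≤ 2) (u v : ℝ) :
    |absRpowDeriv q u - absRpowDeriv q v| ≤ 2 * q * |u - v| ^ (q - 1) := by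
  have hr0 : 0 ≤ q - 1 := by linarith
  rcases le_or_gt (u * v) 0 with huv | huv
  · have hu : |u| ≤ |u - v| := sq_le_sq.1 (by nlinarith)
    have hv : |v| ≤ |u - v| := sq_le_sq.1 (by nlinarith)
    have hu' := Real.rpow_le_rpow (abs_nonneg _) hu hr0
    have hv' := Real.rpow_le_rpow (abs_nonneg _) hv hr0
    calc |absRpowDeriv q u - absRpowDeriv q v|
        ≤ |absRpowDeriv q u| + |absRpowDeriv q v| := abs_sub _ _
      _ ≤ q * |u| ^ (q - 1) + q * |v| ^ (q - 1) :=
          add_le_add (abs_absRpowDeriv_le (by linarith) u) (abs_absRpowDeriv_le (by linarith) v)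
      _ ≤ 2 * q * |u - v| ^ (q - 1) := by nlinarith
  wlog hu : 0 < u generalizing u v
  · have hu' : u < 0 := lt_of_le_of_ne (not_lt.1 hu) (by rintro rfl; simp at huv)
    have h := this (-u) (-v) (by linarith) (by linarith)
    rwa [absRpowDeriv_neg, absRpowDeriv_neg, ← neg_sub', abs_neg, ← neg_sub', abs_neg] at h
  have hv : 0 < v := pos_of_mul_pos_right huv hu.le
  rw [absRpowDeriv_of_pos hu, absRpowDeriv_of_pos hv, ← mul_sub, abs_mul,
    abs_of_nonneg (by linarith)]
  have := Real.abs_rpow_sub_rpow_le hr0 (by linarith) hu.le hv.le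
  nlinarith [Real.rpow_nonneg (abs_nonneg (u - v)) (q - 1)]

/-- The tangent inequality at `x + y`, corrected by the `(q - 1)`-Hölder continuity of
`absRpowDeriv q`. -/
lemma abs_add_rpow_le {q : ℝ} (hq1 : 1 ≤ q) (hq2 : q ≤ 2) (x y : ℝ) :
    |x + y| ^ q ≤ |x| ^ q + absRpowDeriv q x * y + 4 * |y| ^ q := by
  have htangent := abs_rpow_add_absRpowDeriv_mul_le hq1 (x + y) (-y)
  rw [add_neg_cancel_right] at htangent
  have hholder : (absRpowDeriv q (x + y) - absRpowDeriv q x) * y ≤ 2 * q * |y| ^ q := by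
    calc (absRpowDeriv q (x + y) - absRpowDeriv q x) * y
        ≤ |absRpowDeriv q (x + y) - absRpowDeriv q x| * |y| := by
          rw [← abs_mul]; exact le_abs_self _
      _ ≤ 2 * q * |y| ^ (q - 1) * |y| := by
          refine mul_le_mul_of_nonneg_right ?_ (abs_nonneg y)
          simpa using abs_absRpowDeriv_sub_le hq1 hq2 (x + y) x
      _ = 2 * q * |y| ^ q := by rw [mul_assoc, Real.abs_rpow_sub_one_mul_abs (by linarith)]
  nlinarith [Real.rpow_nonneg (abs_nonneg y) q]

section Summation

variable {a : ℕ → ℝ}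

lemma abs_sum_Ioc_sub_mul_sum_div_le (ha : ∀ n, 0 < a n) (hmono : Monotone a) {z : ℕ → ℝ}
    {m : ℕ} {M : ℝ} (hz : ∀ j, |∑ i ∈ Ioc m j, z i / a i| ≤ M) {k : ℕ} (hk : m ≤ k) :
    |∑ i ∈ Ioc m k, z i - a k * ∑ i ∈ Ioc m k, z i / a i| ≤ (a k - a m) * M := by
  induction k, hk using Nat.le_induction with
  | base => simp
  | succ k hk ih =>
    set T := ∑ i ∈ Ioc m k, z i / a i
    have hstep : 0 ≤ a (k + 1) - a k := sub_nonneg.2 (hmono k.le_succ)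
    have key : ∑ i ∈ Ioc m k, z i + z (k + 1) - a (k + 1) * (T + z (k + 1) / a (k + 1)) =
        (∑ i ∈ Ioc m k, z i - a k * T) - (a (k + 1) - a k) * T := by
      field_simp [(ha (k + 1)).ne']
      ring
    rw [sum_Ioc_succ_top hk, sum_Ioc_succ_top hk, key]
    calc _ ≤ |∑ i ∈ Ioc m k, z i - a k * T| + |(a (k + 1) - a k) * T| := abs_sub _ _
      _ ≤ (a k - a m) * M + (a (k + 1) - a k) * M := by
          rw [abs_mul, abs_of_nonneg hstep]
          exact add_le_add ih (mul_le_mul_of_nonneg_left (hz k) hstep)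
      _ = (a (k + 1) - a m) * M := by ring

lemma abs_sum_Ioc_le_of_abs_sum_div_le (ha : ∀ n, 0 < a n) (hmono : Monotone a) {z : ℕ → ℝ}
    {m : ℕ} {M : ℝ} (hz : ∀ j, |∑ i ∈ Ioc m j, z i / a i| ≤ M) {k : ℕ} (hk : m ≤ k) :
    |∑ i ∈ Ioc m k, z i| ≤ 2 * a k * M := by
  have hM : 0 ≤ M := by simpa using hz m
  have hparts := abs_sum_Ioc_sub_mul_sum_div_le ha hmono hz hk
  have hlast : |a k * ∑ i ∈ Ioc m k, z i / a i| ≤ a k * M := by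
    rw [abs_mul, abs_of_pos (ha k)]
    exact mul_le_mul_of_nonneg_left (hz k) (ha k).le
  have htri := abs_add_le (∑ i ∈ Ioc m k, z i - a k * ∑ i ∈ Ioc m k, z i / a i)
    (a k * ∑ i ∈ Ioc m k, z i / a i)
  rw [sub_add_cancel] at htri
  nlinarith [mul_nonneg (ha m).le hM]

lemma le_abs_sum_Ioc_or_of_le_abs_inv_mul_sum (ha : ∀ n, 0 < a n) (hmono : Monotone a)
    {y : ℕ → ℝ} {ε : ℝ} {m k : ℕ} (hk : m ≤ k) (h : ε ≤ |(a k)⁻¹ * ∑ i ∈ Ioc 0 k, y i|) :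
    ε * a m / 2 ≤ |∑ i ∈ Ioc 0 m, y i| ∨ ∃ j, ε / 4 ≤ |∑ i ∈ Ioc m j, y i / a i| := by
  by_contra! hcon
  obtain ⟨hhead, htail⟩ := hcon
  have habel := abs_sum_Ioc_le_of_abs_sum_div_le ha hmono (fun j => (htail j).le) hk
  rw [abs_mul, abs_inv, abs_of_pos (ha k), le_inv_mul_iff₀ (ha k),
    ← sum_Ioc_consecutive _ (Nat.zero_le m) hk] at h
  have hε : 0 ≤ ε := by
    by_contra! hε
    linarith [abs_nonneg (∑ i ∈ Ioc 0 m, y i), mul_neg_of_neg_of_pos hε (ha m)]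
  have := abs_add_le (∑ i ∈ Ioc 0 m, y i) (∑ i ∈ Ioc m k, y i)
  nlinarith [mul_le_mul_of_nonneg_left (hmono hk) hε]

lemma sum_Ioc_le_mul_sum_Ioc_div (ha : ∀ n, 0 < a n) (hmono : Monotone a) {e : ℕ → ℝ}
    (he : ∀ i, 0 ≤ e i) (l k : ℕ) : ∑ i ∈ Ioc l k, e i ≤ a k * ∑ i ∈ Ioc l k, e i / a i := by
  rw [mul_sum]
  refine sum_le_sum fun i hi => ?_
  calc e i = a i * (e i / a i) := by field_simp [(ha i).ne']
    _ ≤ a k * (e i / a i) :=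
        mul_le_mul_of_nonneg_right (hmono (mem_Ioc.1 hi).2) (div_nonneg (he i) (ha i).le)

lemma exists_forall_sum_Ioc_le_mul {ι : Type*} (S : Set ι) (ha : ∀ n, 0 < a n)
    (hmono : Monotone a) (htop : Tendsto a atTop atTop) {e : ι → ℕ → ℝ} (he : ∀ p i, 0 ≤ e p i)
    {C : ℝ} (hC : ∀ p ∈ S, ∀ n, ∑ i ∈ Ioc 0 n, e p i / a i ≤ C)
    (htail : ∀ τ > 0, ∃ N, ∀ m ≥ N, ∀ p ∈ S, ∀ n, ∑ i ∈ Ioc m n, e p i / a i ≤ τ)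
    {η : ℝ} (hη : 0 < η) : ∃ M, ∀ m ≥ M, ∀ p ∈ S, ∑ i ∈ Ioc 0 m, e p i ≤ η * a m := by
  obtain ⟨N, hN⟩ := htail (η / 2) (by positivity)
  obtain ⟨M, hM⟩ := eventually_atTop.1 (htop.eventually_ge_atTop (2 * a N * C / η))
  refine ⟨max N M, fun m hm p hp => ?_⟩
  have hNm : N ≤ m := le_of_max_le_left hm
  have hlarge := hM m (le_of_max_le_right hm)
  rw [div_le_iff₀ hη] at hlarge
  have hhead := (sum_Ioc_le_mul_sum_Ioc_div ha hmono (he p) 0 N).trans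
    (mul_le_mul_of_nonneg_left (hC p hp N) (ha N).le)
  have htail := (sum_Ioc_le_mul_sum_Ioc_div ha hmono (he p) N m).trans
    (mul_le_mul_of_nonneg_left (hN N le_rfl p hp m) (ha m).le)
  rw [← sum_Ioc_consecutive _ (Nat.zero_le N) hNm]
  linarith

lemma sum_Ioc_le_of_tsum_ofReal_le {f : ℕ → ℝ} (hf : ∀ i, 0 ≤ f i) {m : ℕ} {τ : ℝ}
    (hτ : 0 ≤ τ) (h : ∑' k, ENNReal.ofReal (f (m + 1 + k)) ≤ ENNReal.ofReal τ) (n : ℕ) :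
    ∑ i ∈ Ioc m n, f i ≤ τ := by
  rw [← Ico_add_one_add_one_eq_Ioc, sum_Ico_eq_sum_range, ← ENNReal.ofReal_le_ofReal_iff hτ,
    ENNReal.ofReal_sum_of_nonneg fun i _ => hf _]
  exact (ENNReal.sum_le_tsum _).trans h

end Summation

section Moments

variable {Ω : Type*} {mΩ : MeasurableSpace Ω} {μ : Measure Ω} {q : ℝ}

lemma integrable_abs_rpow_iff_memLp {f : Ω → ℝ} (hf : AEStronglyMeasurable f μ) (hq : 0 < q) :
    Integrable (fun ω => |f ω| ^ q) μ ↔ MemLp f (ENNReal.ofReal q) μ := by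
  rw [← integrable_norm_rpow_iff hf (by simpa using hq) ENNReal.ofReal_ne_top,
    ENNReal.toReal_ofReal hq.le]
  rfl

lemma MeasureTheory.MemLp.integrable_abs_rpow {f : Ω → ℝ} (hf : MemLp f (ENNReal.ofReal q) μ)
    (hq : 0 < q) : Integrable (fun ω => |f ω| ^ q) μ :=
  (integrable_abs_rpow_iff_memLp hf.aestronglyMeasurable hq).2 hf

lemma MeasureTheory.MemLp.integrable_absRpowDeriv [IsFiniteMeasure μ] {f : Ω → ℝ}
    (hf : MemLp f (ENNReal.ofReal q) μ) (hq : 1 ≤ q) :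
    Integrable (fun ω => absRpowDeriv q (f ω)) μ :=
  Integrable.mono' (((integrable_const 1).add (hf.integrable_abs_rpow (by linarith))).const_mul q)
    ((measurable_absRpowDeriv q).comp_aemeasurable hf.aemeasurable).aestronglyMeasurable
    (Eventually.of_forall fun ω => abs_absRpowDeriv_le_one_add hq (f ω))

variable [IsProbabilityMeasure μ]

lemma integral_abs_add_rpow_le (hq1 : 1 ≤ q) (hq2 : q ≤ 2) {X Y : Ω → ℝ} (hXY : IndepFun X Y μ)
    (hX : MemLp X (ENNReal.ofReal q) μ) (hY : MemLp Y (ENNReal.ofReal q) μ)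
    (hY0 : ∫ ω, Y ω ∂μ = 0) :
    ∫ ω, |X ω + Y ω| ^ q ∂μ ≤ ∫ ω, |X ω| ^ q ∂μ + 4 * ∫ ω, |Y ω| ^ q ∂μ := by
  have hq0 : 0 < q := by linarith
  have hYint : Integrable Y μ := hY.integrable (by simpa using hq1)
  have hg := hX.integrable_absRpowDeriv hq1
  have hgY : IndepFun (fun ω => absRpowDeriv q (X ω)) Y μ :=
    hXY.comp (measurable_absRpowDeriv q) measurable_id
  have hcross : ∫ ω, absRpowDeriv q (X ω) * Y ω ∂μ = 0 := by
    simpa [hY0] using hgY.integral_mul_eq_mul_integral hg.aestronglyMeasurable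
      hYint.aestronglyMeasurable
  have hXq := hX.integrable_abs_rpow hq0
  have hYq := hY.integrable_abs_rpow hq0
  have hcrossint : Integrable (fun ω => absRpowDeriv q (X ω) * Y ω) μ :=
    hgY.integrable_mul hg hYint
  have hhead : Integrable (fun ω => |X ω| ^ q + absRpowDeriv q (X ω) * Y ω) μ :=
    hXq.add hcrossint
  calc ∫ ω, |X ω + Y ω| ^ q ∂μ
      ≤ ∫ ω, |X ω| ^ q + absRpowDeriv q (X ω) * Y ω + 4 * |Y ω| ^ q ∂μ :=
        integral_mono ((hX.add hY).integrable_abs_rpow hq0) (hhead.add (hYq.const_mul 4))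
          fun ω => abs_add_rpow_le hq1 hq2 (X ω) (Y ω)
    _ = ∫ ω, |X ω| ^ q ∂μ + 4 * ∫ ω, |Y ω| ^ q ∂μ := by
        rw [integral_add hhead (hYq.const_mul 4), integral_add hXq hcrossint,
          integral_const_mul, hcross, add_zero]

/-- The von Bahr–Esseen inequality. -/
theorem integral_abs_sum_rpow_le (hq1 : 1 ≤ q) (hq2 : q ≤ 2) {ι : Type*} {Y : ι → Ω → ℝ}
    (hind : iIndepFun Y μ) (hY : ∀ i, MemLp (Y i) (ENNReal.ofReal q) μ)
    (h0 : ∀ i, ∫ ω, Y i ω ∂μ = 0) (s : Finset ι) :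
    ∫ ω, |∑ i ∈ s, Y i ω| ^ q ∂μ ≤ 4 * ∑ i ∈ s, ∫ ω, |Y i ω| ^ q ∂μ := by
  classical
  induction s using Finset.induction_on with
  | empty => simp [Real.zero_rpow (by linarith : q ≠ 0)]
  | insert j s hj ih =>
    have hindep : IndepFun (fun ω => ∑ i ∈ s, Y i ω) (Y j) μ := by
      simpa [Finset.sum_fn] using
        hind.indepFun_finsetSum_of_notMem₀ (fun i => (hY i).aemeasurable) hj
    have := integral_abs_add_rpow_le hq1 hq2 hindep (memLp_finsetSum s fun i _ => hY i) (hY j)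
      (h0 j)
    simp only [sum_insert hj, add_comm (Y j _)]
    linarith

lemma setIntegral_abs_rpow_le_setIntegral_abs_add_rpow (hq : 1 ≤ q) {m : MeasurableSpace Ω}
    (hm : m ≤ mΩ) {S R : Ω → ℝ} (hS : Measurable[m] S)
    (hind : Indep m (MeasurableSpace.comap R inferInstance) μ)
    (hSq : MemLp S (ENNReal.ofReal q) μ) (hRq : MemLp R (ENNReal.ofReal q) μ)
    (hR0 : ∫ ω, R ω ∂μ = 0) {s : Set Ω} (hs : MeasurableSet[m] s) :
    ∫ ω in s, |S ω| ^ q ∂μ ≤ ∫ ω in s, |S ω + R ω| ^ q ∂μ := by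
  have hq0 : 0 < q := by linarith
  set F := s.indicator fun ω => absRpowDeriv q (S ω)
  have hFR : IndepFun F R μ := (IndepFun_iff_Indep F R μ).2
    (indep_of_indep_of_le_left hind (((measurable_absRpowDeriv q).comp hS).indicator hs).comap_le)
  have hFint : Integrable F μ := (hSq.integrable_absRpowDeriv hq).indicator (hm s hs)
  have hRint : Integrable R μ := hRq.integrable (by simpa using hq)
  have hFR_eq : (fun ω => F ω * R ω) = s.indicator fun ω => absRpowDeriv q (S ω) * R ω := by
    ext ω
    by_cases hω : ω ∈ s <;> simp [F, hω]
  have hcrossint : IntegrableOn (fun ω => absRpowDeriv q (S ω) * R ω) s μ := by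
    rw [← integrable_indicator_iff (hm s hs), ← hFR_eq]
    exact hFR.integrable_mul hFint hRint
  have hcross : ∫ ω in s, absRpowDeriv q (S ω) * R ω ∂μ = 0 := by
    rw [← integral_indicator (hm s hs), ← hFR_eq]
    simpa [hR0] using hFR.integral_mul_eq_mul_integral hFint.aestronglyMeasurable
      hRint.aestronglyMeasurable
  have hSint : IntegrableOn (fun ω => |S ω| ^ q) s μ := (hSq.integrable_abs_rpow hq0).integrableOn
  calc ∫ ω in s, |S ω| ^ q ∂μ = ∫ ω in s, |S ω| ^ q + absRpowDeriv q (S ω) * R ω ∂μ := by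
        rw [integral_add hSint hcrossint, hcross, add_zero]
    _ ≤ ∫ ω in s, |S ω + R ω| ^ q ∂μ :=
        setIntegral_mono (hSint.add hcrossint) ((hSq.add hRq).integrable_abs_rpow hq0).integrableOn
          fun ω => abs_rpow_add_absRpowDeriv_mul_le hq _ _

theorem submartingale_abs_rpow_sum_Ioc (hq1 : 1 ≤ q) {Y : ℕ → Ω → ℝ}
    (hmeas : ∀ i, Measurable (Y i)) (hind : iIndepFun Y μ)
    (hY : ∀ i, MemLp (Y i) (ENNReal.ofReal q) μ) (h0 : ∀ i, ∫ ω, Y i ω ∂μ = 0) (m : ℕ) :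
    Submartingale (fun k ω => |∑ i ∈ Ioc m k, Y i ω| ^ q)
      (Filtration.natural Y fun i => (hmeas i).stronglyMeasurable) μ := by
  set ℱ := Filtration.natural Y fun i => (hmeas i).stronglyMeasurable
  have hYℱ : ∀ {i k}, i ≤ k → Measurable[ℱ k] (Y i) := fun {i k} hik =>
    (comap_measurable (Y i)).mono
      (le_iSup₂ (f := fun j (_ : j ≤ k) => MeasurableSpace.comap (Y j) inferInstance) i hik) le_rfl
  have hSℱ : ∀ k, Measurable[ℱ k] fun ω => ∑ i ∈ Ioc m k, Y i ω := fun k =>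
    Finset.measurable_sum _ fun i hi => hYℱ (mem_Ioc.1 hi).2
  have hadapt : StronglyAdapted ℱ fun k ω => |∑ i ∈ Ioc m k, Y i ω| ^ q := fun k =>
    ((measurable_id.abs.pow_const q).comp (hSℱ k)).stronglyMeasurable
  refine submartingale_of_setIntegral_le hadapt
    (fun k => (memLp_finsetSum _ fun i _ => hY i).integrable_abs_rpow (by linarith))
    fun k l hkl s hs => ?_
  have hsplit : ∀ ω, ∑ i ∈ Ioc m l, Y i ω =
      ∑ i ∈ Ioc m k, Y i ω + ∑ i ∈ Ioc m l \ Ioc m k, Y i ω := fun ω => by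
    rw [add_comm, sum_sdiff (Ioc_subset_Ioc_right hkl)]
  simp_rw [hsplit]
  have hfuture : Indep (ℱ k) (⨆ i ∈ Set.Ioi k, MeasurableSpace.comap (Y i) inferInstance) μ :=
    indep_iSup_of_disjoint (fun i => (hmeas i).comap_le) ((iIndepFun_iff_iIndep _ _ _).1 hind)
      (Set.Iic_disjoint_Ioi le_rfl)
  refine setIntegral_abs_rpow_le_setIntegral_abs_add_rpow hq1 (ℱ.le k) (hSℱ k)
    (indep_of_indep_of_le_right hfuture ?_) (memLp_finsetSum _ fun i _ => hY i)
    (memLp_finsetSum _ fun i _ => hY i) ?_ hs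
  · refine (Finset.measurable_sum _ fun i hi => (comap_measurable (Y i)).mono
      (le_iSup₂ (f := fun j (_ : j ∈ Set.Ioi k) => MeasurableSpace.comap (Y j) inferInstance) i
        ?_) le_rfl).comap_le
    rw [Finset.mem_sdiff, Finset.mem_Ioc, Finset.mem_Ioc] at hi
    exact Set.mem_Ioi.2 (by omega)
  · rw [integral_finsetSum _ fun i _ => (hY i).integrable (by simpa using hq1)]
    simp [h0]

theorem measure_exists_le_abs_sum_Ioc_le (hq1 : 1 ≤ q) {Y : ℕ → Ω → ℝ}
    (hmeas : ∀ i, Measurable (Y i)) (hind : iIndepFun Y μ)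
    (hY : ∀ i, MemLp (Y i) (ENNReal.ofReal q) μ) (h0 : ∀ i, ∫ ω, Y i ω ∂μ = 0) (m n : ℕ)
    {c : ℝ} (hc : 0 < c) :
    μ {ω | ∃ k ≤ n, c ≤ |∑ i ∈ Ioc m k, Y i ω|} ≤
      ENNReal.ofReal ((∫ ω, |∑ i ∈ Ioc m n, Y i ω| ^ q ∂μ) / c ^ q) := by
  have hq0 : 0 < q := by linarith
  have hcq : 0 < c ^ q := Real.rpow_pos_of_pos hc q
  have hdoob := maximal_ineq (submartingale_abs_rpow_sum_Ioc hq1 hmeas hind hY h0 m)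
    (fun k ω => Real.rpow_nonneg (abs_nonneg _) _) (ε := (c ^ q).toNNReal) n
  have hset : {ω | (((c ^ q).toNNReal : ℝ≥0) : ℝ) ≤ (range (n + 1)).sup' nonempty_range_add_one
      fun k => |∑ i ∈ Ioc m k, Y i ω| ^ q} = {ω | ∃ k ≤ n, c ≤ |∑ i ∈ Ioc m k, Y i ω|} := by
    ext ω
    simp [le_sup'_iff, Real.coe_toNNReal _ hcq.le,
      Real.rpow_le_rpow_iff hc.le (abs_nonneg _) hq0]
  rw [hset] at hdoob
  have hint : Integrable (fun ω => |∑ i ∈ Ioc m n, Y i ω| ^ q) μ :=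
    (memLp_finsetSum _ fun i _ => hY i).integrable_abs_rpow hq0
  rw [ENNReal.ofReal_div_of_pos hcq, ENNReal.le_div_iff_mul_le (by simp [hcq]) (by simp),
    mul_comm]
  exact hdoob.trans (ENNReal.ofReal_le_ofReal (setIntegral_le_integral hint
    (Eventually.of_forall fun ω => Real.rpow_nonneg (abs_nonneg _) _)))

theorem measure_exists_le_abs_sum_Ioc_le_of_forall_le (hq1 : 1 ≤ q) (hq2 : q ≤ 2)
    {Y : ℕ → Ω → ℝ} (hmeas : ∀ i, Measurable (Y i)) (hind : iIndepFun Y μ)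
    (hY : ∀ i, MemLp (Y i) (ENNReal.ofReal q) μ) (h0 : ∀ i, ∫ ω, Y i ω ∂μ = 0) (m : ℕ)
    {c B : ℝ} (hc : 0 < c) (hB : ∀ n, ∑ i ∈ Ioc m n, ∫ ω, |Y i ω| ^ q ∂μ ≤ B) :
    μ {ω | ∃ k, c ≤ |∑ i ∈ Ioc m k, Y i ω|} ≤ ENNReal.ofReal (4 * B / c ^ q) := by
  have hunion : {ω | ∃ k, c ≤ |∑ i ∈ Ioc m k, Y i ω|} =
      ⋃ n, {ω | ∃ k ≤ n, c ≤ |∑ i ∈ Ioc m k, Y i ω|} := by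
    ext ω
    simp only [Set.mem_iUnion]
    exact ⟨fun ⟨k, hk⟩ => ⟨k, k, le_rfl, hk⟩, fun ⟨_, k, _, hk⟩ => ⟨k, hk⟩⟩
  have hmono : Monotone fun n => {ω | ∃ k ≤ n, c ≤ |∑ i ∈ Ioc m k, Y i ω|} :=
    fun n n' hn ω ⟨k, hk, hω⟩ => ⟨k, hk.trans hn, hω⟩
  rw [hunion, hmono.measure_iUnion]
  refine iSup_le fun n => (measure_exists_le_abs_sum_Ioc_le hq1 hmeas hind hY h0 m n hc).trans
    (ENNReal.ofReal_le_ofReal (div_le_div_of_nonneg_right ?_ (Real.rpow_nonneg hc.le q)))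
  linarith [integral_abs_sum_rpow_le hq1 hq2 hind hY h0 (Ioc m n), hB n]

theorem measure_exists_le_abs_inv_mul_sum_le (hq1 : 1 ≤ q) (hq2 : q ≤ 2) {Y : ℕ → Ω → ℝ}
    (hmeas : ∀ i, Measurable (Y i)) (hind : iIndepFun Y μ)
    (hY : ∀ i, MemLp (Y i) (ENNReal.ofReal q) μ) (h0 : ∀ i, ∫ ω, Y i ω ∂μ = 0) {a : ℕ → ℝ}
    (ha : ∀ n, 0 < a n) (hmono : Monotone a) {m : ℕ} {ε η τ : ℝ} (hε : 0 < ε)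
    (hη : ∑ i ∈ Ioc 0 m, ∫ ω, |Y i ω| ^ q ∂μ ≤ η * a m ^ q)
    (hτ : ∀ n, ∑ i ∈ Ioc m n, (∫ ω, |Y i ω| ^ q ∂μ) / a i ^ q ≤ τ) :
    μ {ω | ∃ k ≥ m, ε ≤ |(a k)⁻¹ * ∑ i ∈ Icc 1 k, Y i ω|} ≤
      ENNReal.ofReal (4 * η / (ε / 2) ^ q) + ENNReal.ofReal (4 * τ / (ε / 4) ^ q) := by
  have hsub : {ω | ∃ k ≥ m, ε ≤ |(a k)⁻¹ * ∑ i ∈ Icc 1 k, Y i ω|} ⊆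
      {ω | ∃ k ≤ m, ε * a m / 2 ≤ |∑ i ∈ Ioc 0 k, Y i ω|} ∪
        {ω | ∃ j, ε / 4 ≤ |∑ i ∈ Ioc m j, Y i ω / a i|} := by
    rintro ω ⟨k, hk, hω⟩
    rw [show Icc 1 k = Ioc 0 k from Icc_add_one_left_eq_Ioc 0 k] at hω
    rcases le_abs_sum_Ioc_or_of_le_abs_inv_mul_sum ha hmono hk hω with h | h
    exacts [Or.inl ⟨m, le_rfl, h⟩, Or.inr h]
  refine (measure_mono hsub).trans ((measure_union_le _ _).trans (add_le_add ?_ ?_))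
  · have hc : 0 < ε * a m / 2 := by have := ha m; positivity
    refine (measure_exists_le_abs_sum_Ioc_le hq1 hmeas hind hY h0 0 m hc).trans
      (ENNReal.ofReal_le_ofReal ?_)
    have hvbe := integral_abs_sum_rpow_le hq1 hq2 hind hY h0 (Ioc 0 m)
    have ham : 0 < a m ^ q := Real.rpow_pos_of_pos (ha m) q
    rw [show ε * a m / 2 = ε / 2 * a m by ring, Real.mul_rpow (by positivity) (ha m).le,
      div_le_div_iff₀ (by positivity) (by positivity)]
    calc (∫ ω, |∑ i ∈ Ioc 0 m, Y i ω| ^ q ∂μ) * (ε / 2) ^ q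
        ≤ 4 * η * a m ^ q * (ε / 2) ^ q := by gcongr; linarith
      _ = 4 * η * ((ε / 2) ^ q * a m ^ q) := by ring
  · have hZ : ∀ i, (∫ ω, |Y i ω / a i| ^ q ∂μ) = (∫ ω, |Y i ω| ^ q ∂μ) / a i ^ q := fun i => by
      simp_rw [abs_div, abs_of_pos (ha i), Real.div_rpow (abs_nonneg _) (ha i).le]
      exact integral_div _ _
    refine measure_exists_le_abs_sum_Ioc_le_of_forall_le hq1 hq2
      (fun i => (hmeas i).div_const (a i)) (hind.comp _ fun i => measurable_id.div_const (a i))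
      (fun i => by simpa only [div_eq_mul_inv] using (hY i).mul_const (a i)⁻¹)
      (fun i => by rw [integral_div, h0 i, zero_div]) m
      (by positivity) fun n => ?_
    simpa only [hZ] using hτ n

end Moments

/-- Ps-uniform strong law of large numbers for independent, non-identically distributed random
variables: under the uniform boundedness and uniformly vanishing tails of
`Σ_k E_P|X_k − E_P X_k|^q / a_k^q`, the normalized centered sums vanish Ps-uniformly a.s. -/
theorem stmt12 {Ω : Type*} [MeasurableSpace Ω] (Ps : Set (Measure Ω))
    (hPs : ∀ P ∈ Ps, IsProbabilityMeasure P)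
    (X : ℕ → Ω → ℝ) (hmeas : ∀ n, Measurable (X n))
    (hindep : ∀ P ∈ Ps, iIndepFun X P)
    (q : ℝ) (hq1 : 1 ≤ q) (hq2 : q ≤ 2)
    (a : ℕ → ℝ) (hapos : ∀ n, 0 < a n) (hamono : Monotone a) (hatop : Tendsto a atTop atTop)
    (hint : ∀ P ∈ Ps, ∀ k, Integrable (X k) P)
    (hmom : ∀ P ∈ Ps, ∀ k, Integrable (fun ω => |X k ω - ∫ x, X k x ∂P| ^ q) P)
    (hbdd : ∃ C : ℝ, ∀ P ∈ Ps,
      ∑' k : ℕ, ENNReal.ofReal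
        ((∫ ω, |X (k + 1) ω - ∫ x, X (k + 1) x ∂P| ^ q ∂P) / a (k + 1) ^ q) ≤
        ENNReal.ofReal C)
    (htail : ∀ ε : ℝ, 0 < ε → ∃ M : ℕ, ∀ m ≥ M, ∀ P ∈ Ps,
      ∑' k : ℕ, ENNReal.ofReal
        ((∫ ω, |X (m + k) ω - ∫ x, X (m + k) x ∂P| ^ q ∂P) / a (m + k) ^ q) <
        ENNReal.ofReal ε) :
    ∀ ε : ℝ, 0 < ε → ∀ δ : ℝ, 0 < δ → ∃ M : ℕ, ∀ m ≥ M, ∀ P ∈ Ps,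
      P {ω | ∃ k ≥ m, ε ≤
        |(a k)⁻¹ * ∑ i ∈ Finset.Icc 1 k, (X i ω - ∫ x, X i x ∂P)|} <
        ENNReal.ofReal δ := by
  intro ε hε δ hδ
  have hq0 : 0 < q := by linarith
  set e : Measure Ω → ℕ → ℝ := fun P i => ∫ ω, |X i ω - ∫ x, X i x ∂P| ^ q ∂P
  have he : ∀ P i, 0 ≤ e P i := fun P i =>
    integral_nonneg fun ω => Real.rpow_nonneg (abs_nonneg _) _
  have hediv : ∀ P i, 0 ≤ e P i / a i ^ q := fun P i =>
    div_nonneg (he P i) (Real.rpow_nonneg (hapos i).le q)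
  have hsmall : ∀ τ > 0, ∃ N, ∀ m ≥ N, ∀ P ∈ Ps, ∀ n, ∑ i ∈ Ioc m n, e P i / a i ^ q ≤ τ :=
    fun τ hτ => (htail τ hτ).imp fun N hN m hm P hP =>
      sum_Ioc_le_of_tsum_ofReal_le (hediv P) hτ.le (hN (m + 1) (by omega) P hP).le
  obtain ⟨C, hC⟩ := hbdd
  obtain ⟨M₁, hM₁⟩ := exists_forall_sum_Ioc_le_mul Ps (a := fun i => a i ^ q)
    (fun n => by have := hapos n; positivity)
    (fun i j hij => Real.rpow_le_rpow (hapos i).le (hamono hij) hq0.le)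
    ((tendsto_rpow_atTop hq0).comp hatop) he (C := max C 0)
    (fun P hP => sum_Ioc_le_of_tsum_ofReal_le (hediv P) (le_max_right C 0)
      (by simpa [add_comm] using (hC P hP).trans (ENNReal.ofReal_le_ofReal (le_max_left C 0))))
    hsmall (η := δ * (ε / 2) ^ q / 12) (by positivity)
  obtain ⟨M₂, hM₂⟩ := hsmall (δ * (ε / 4) ^ q / 12) (by positivity)
  refine ⟨max M₁ M₂, fun m hm P hP => ?_⟩
  have := hPs P hP
  calc _ ≤ ENNReal.ofReal (4 * (δ * (ε / 2) ^ q / 12) / (ε / 2) ^ q) +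
        ENNReal.ofReal (4 * (δ * (ε / 4) ^ q / 12) / (ε / 4) ^ q) :=
        measure_exists_le_abs_inv_mul_sum_le hq1 hq2 (fun i => (hmeas i).sub_const _)
          ((hindep P hP).comp _ fun i => measurable_id.sub_const _)
          (fun i => (integrable_abs_rpow_iff_memLp
            ((hmeas i).sub_const _).aestronglyMeasurable hq0).1 (hmom P hP i))
          (fun i => by simp [integral_sub (hint P hP i) (integrable_const _)]) hapos hamono hε
          (hM₁ m (le_of_max_le_left hm) P hP) (hM₂ m (le_of_max_le_right hm) P hP)
    _ = ENNReal.ofReal (δ / 3 + δ / 3) := by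
        rw [← ENNReal.ofReal_add (by positivity) (by positivity)]
        congr 1
        field_simp
        ring
    _ < ENNReal.ofReal δ := (ENNReal.ofReal_lt_ofReal_iff hδ).2 (by linarith)
end

section
/- Let (X_n) be i.i.d. under each P in a family 𝒫, let 0 < q < 2, and set μ(P;q) = E_P X if 1 ≤ q < 2 and μ(P;q) = 0 if 0 < q < 1. If lim_{m→∞} sup_{P∈𝒫} E_P(|X − μ(P;q)|^q · 1{|X − μ(P;q)|^q > m}) > 0, then lim_{m→∞} sup_{P∈𝒫} P( sup_{k ≥ m} |k^{−1/q} Σ_{i=1}^k (X_i − μ(P;q))| ≥ 1/2 ) > 0; in particular the 𝒫-uniform strong law at rate n^{1/q−1} fails. -/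
/-!
Write `Y = |X - μ(P;q)|^q`. Slicing the tail expectation `E_P[Y; Y > 8M]` into layers of height 4
bounds it by `8 ∑_{j ≥ M} P(Y > 4j)`, and since `2^q ≤ 4` and the `X_j` are identically
distributed, `P(Y > 4j) ≤ P(|X_j - μ| > 2 j^{1/q})`. So failure of uniform integrability gives,
for every `M`, some `P` under which these exceedance probabilities sum to more than `ε/16`; by
independence (`∏ (1 - p_j) ≤ exp (-∑ p_j)`) one of the exceedances occurs with probability at
least `1 - exp (-ε/16)`. Finally a single increment `|X_j - μ| > 2 j^{1/q}` forces
`|S_j| > j^{1/q}` or `|S_{j-1}| > j^{1/q}`.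
-/

open MeasureTheory ProbabilityTheory

theorem ofReal_le_tsum_ite_mul_lt {c y : ℝ} (hc : 0 < c) {M : ℕ} (h : 2 * c * M < y) :
    ENNReal.ofReal y ≤ ∑' k : ℕ, if c * (M + k) < y then ENNReal.ofReal (2 * c) else 0 := by
  -- the first `⌈y / 2c⌉` layers all lie below `y`, because `c * M < y / 2`
  set n := ⌈y / (2 * c)⌉₊
  have hy : 0 < y := lt_of_le_of_lt (by positivity) h
  have hM : (M : ℝ) < y / (2 * c) := by rw [lt_div_iff₀ (by positivity)]; linarith
  have hn : (n : ℝ) < y / (2 * c) + 1 := Nat.ceil_lt_add_one (by positivity)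
  calc ENNReal.ofReal y ≤ ENNReal.ofReal (n * (2 * c)) :=
        ENNReal.ofReal_le_ofReal ((div_le_iff₀ (by positivity)).mp (Nat.le_ceil _))
    _ = ∑ k ∈ Finset.range n, if c * (M + k) < y then ENNReal.ofReal (2 * c) else 0 := by
        rw [ENNReal.ofReal_mul (Nat.cast_nonneg n), ENNReal.ofReal_natCast,
          Finset.sum_congr rfl fun k hk => if_pos ?_]
        · simp
        have hk : (k : ℝ) + 1 ≤ n := by exact_mod_cast Finset.mem_range.mp hk
        have : (M : ℝ) + k < y / c := by
          have : y / (2 * c) * 2 = y / c := by field_simp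
          linarith
        rwa [lt_div_iff₀ hc, mul_comm] at this
    _ ≤ _ := ENNReal.sum_le_tsum _

theorem setLIntegral_ofReal_le_mul_tsum_measure_lt {Ω : Type*} [MeasurableSpace Ω]
    {μ : Measure Ω} {f : Ω → ℝ} (hf : Measurable f) {c : ℝ} (hc : 0 < c) (M : ℕ) :
    ∫⁻ ω in {ω | 2 * c * M < f ω}, ENNReal.ofReal (f ω) ∂μ ≤
      ENNReal.ofReal (2 * c) * ∑' k : ℕ, μ {ω | c * (M + k) < f ω} := by
  have hmeas : ∀ a : ℝ, MeasurableSet {ω | a < f ω} := fun a =>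
    measurableSet_lt measurable_const hf
  calc ∫⁻ ω in {ω | 2 * c * M < f ω}, ENNReal.ofReal (f ω) ∂μ
      = ∫⁻ ω, {ω | 2 * c * M < f ω}.indicator (fun ω => ENNReal.ofReal (f ω)) ω ∂μ :=
        (lintegral_indicator (hmeas _) _).symm
    _ ≤ ∫⁻ ω, ∑' k : ℕ,
          {ω | c * (M + k) < f ω}.indicator (fun _ => ENNReal.ofReal (2 * c)) ω ∂μ := by
        refine lintegral_mono fun ω => ?_
        simp only [Set.indicator_apply, Set.mem_ofPred_eq]
        split_ifs with h
        · exact ofReal_le_tsum_ite_mul_lt hc h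
        · exact zero_le
    _ = ENNReal.ofReal (2 * c) * ∑' k : ℕ, μ {ω | c * (M + k) < f ω} := by
        rw [lintegral_tsum fun k => (measurable_const.indicator (hmeas _)).aemeasurable,
          ← ENNReal.tsum_mul_left]
        simp only [lintegral_indicator_const (hmeas _)]

theorem two_mul_rpow_one_div_lt_of_four_mul_lt_rpow {q a z : ℝ} (hq0 : 0 < q) (hq2 : q ≤ 2)
    (ha : 0 ≤ a) (hz : 0 ≤ z) (h : 4 * a < z ^ q) : 2 * a ^ (1 / q) < z := by
  have h2q : (2 : ℝ) ^ q ≤ 4 := by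
    simpa [show (2 : ℝ) ^ (2 : ℝ) = 4 by norm_num] using
      Real.rpow_le_rpow_of_exponent_le (by norm_num : (1 : ℝ) ≤ 2) hq2
  rw [← Real.rpow_lt_rpow_iff (by positivity) hz hq0, Real.mul_rpow (by norm_num) (by positivity),
    ← Real.rpow_mul ha, one_div_mul_cancel hq0.ne', Real.rpow_one]
  nlinarith

theorem Real.prod_one_sub_le_exp_neg_sum {ι : Type*} (t : Finset ι) {p : ι → ℝ}
    (hp : ∀ i ∈ t, p i ≤ 1) : ∏ i ∈ t, (1 - p i) ≤ Real.exp (-∑ i ∈ t, p i) := by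
  rw [← Finset.sum_neg_distrib, Real.exp_sum]
  exact Finset.prod_le_prod (fun i hi => by linarith [hp i hi]) fun i _ =>
    Real.one_sub_le_exp_neg _

namespace ProbabilityTheory

variable {Ω ι : Type*} [MeasurableSpace Ω] {μ : Measure Ω} {β : ι → Type*}
  {mβ : ∀ i, MeasurableSpace (β i)} {X : ∀ i, Ω → β i} {s : ∀ i, Set (β i)}

theorem iIndepFun.measureReal_biInter_preimage_compl (hX : iIndepFun X μ)
    (hXm : ∀ i, Measurable (X i)) (hs : ∀ i, MeasurableSet (s i)) (t : Finset ι) :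
    μ.real (⋂ i ∈ t, (X i ⁻¹' s i)ᶜ) = ∏ i ∈ t, (1 - μ.real (X i ⁻¹' s i)) := by
  have := hX.isProbabilityMeasure
  simp_rw [← Set.preimage_compl, measureReal_def,
    hX.measure_inter_preimage_eq_mul t fun i _ => (hs i).compl, ENNReal.toReal_prod,
    Set.preimage_compl, ← measureReal_def, probReal_compl_eq_one_sub ((hs _).preimage (hXm _))]

theorem iIndepFun.one_sub_exp_neg_sum_le_measureReal_biUnion (hX : iIndepFun X μ)
    (hXm : ∀ i, Measurable (X i)) (hs : ∀ i, MeasurableSet (s i)) (t : Finset ι) :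
    1 - Real.exp (-∑ i ∈ t, μ.real (X i ⁻¹' s i)) ≤ μ.real (⋃ i ∈ t, X i ⁻¹' s i) := by
  have := hX.isProbabilityMeasure
  have hU : MeasurableSet (⋃ i ∈ t, X i ⁻¹' s i) :=
    t.measurableSet_biUnion fun i _ => (hs i).preimage (hXm i)
  have hcompl : μ.real (⋃ i ∈ t, X i ⁻¹' s i)ᶜ ≤ Real.exp (-∑ i ∈ t, μ.real (X i ⁻¹' s i)) := by
    rw [Set.compl_iUnion₂, hX.measureReal_biInter_preimage_compl hXm hs]
    exact Real.prod_one_sub_le_exp_neg_sum t fun i _ => measureReal_le_one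
  linarith [probReal_compl_eq_one_sub (μ := μ) hU]

theorem iIndepFun.exists_finset_ofReal_one_sub_exp_neg_le_measure_biUnion (hX : iIndepFun X μ)
    (hXm : ∀ i, Measurable (X i)) (hs : ∀ i, MeasurableSet (s i)) {δ : ℝ}
    (hδ : ENNReal.ofReal δ < ∑' i, μ (X i ⁻¹' s i)) :
    ∃ t : Finset ι, ENNReal.ofReal (1 - Real.exp (-δ)) ≤ μ (⋃ i ∈ t, X i ⁻¹' s i) := by
  have := hX.isProbabilityMeasure
  rw [ENNReal.tsum_eq_iSup_sum, lt_iSup_iff] at hδ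
  obtain ⟨t, ht⟩ := hδ
  have ht_real : δ ≤ ∑ i ∈ t, μ.real (X i ⁻¹' s i) := by
    rw [← ENNReal.ofReal_le_ofReal_iff (by positivity),
      ENNReal.ofReal_sum_of_nonneg fun _ _ => measureReal_nonneg,
      Finset.sum_congr rfl fun i _ => ofReal_measureReal (measure_ne_top μ _)]
    exact ht.le
  refine ⟨t, ?_⟩
  rw [← ofReal_measureReal (measure_ne_top μ _)]
  refine ENNReal.ofReal_le_ofReal
    (le_trans ?_ (hX.one_sub_exp_neg_sum_le_measureReal_biUnion hXm hs t))
  gcongr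

end ProbabilityTheory

theorem exists_one_le_abs_rpow_inv_mul_sum_Icc {x : ℕ → ℝ} {r : ℝ} (hr : 0 ≤ r) {j : ℕ}
    (hj : 1 ≤ j) (hx : 2 * (j : ℝ) ^ r < |x j|) :
    ∃ k, j - 1 ≤ k ∧ 1 ≤ |((k : ℝ) ^ r)⁻¹ * ∑ i ∈ Finset.Icc 1 k, x i| := by
  set S : ℕ → ℝ := fun k => ∑ i ∈ Finset.Icc 1 k, x i
  have hratio : ∀ k ≤ j, (j : ℝ) ^ r < |S k| → 1 ≤ |((k : ℝ) ^ r)⁻¹ * S k| := by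
    intro k hkj hk
    rcases Nat.eq_zero_or_pos k with rfl | hk0
    · have : (0 : ℝ) ≤ (j : ℝ) ^ r := by positivity
      simp [S] at hk; linarith
    have hpos : (0 : ℝ) < (k : ℝ) ^ r := by positivity
    have hle : (k : ℝ) ^ r ≤ (j : ℝ) ^ r := by gcongr
    rw [abs_mul, abs_inv, abs_of_pos hpos, le_inv_mul_iff₀ hpos]
    linarith
  have hS : x j = S j - S (j - 1) := by
    obtain ⟨i, rfl⟩ := Nat.exists_eq_add_of_le' hj
    simp [S, Finset.sum_Icc_succ_top]
  by_cases h : (j : ℝ) ^ r < |S j|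
  · exact ⟨j, Nat.sub_le j 1, hratio j le_rfl h⟩
  · refine ⟨j - 1, le_rfl, hratio (j - 1) (Nat.sub_le j 1) ?_⟩
    have := abs_sub (S j) (S (j - 1))
    rw [← hS] at this
    linarith

theorem lintegral_tail_rpow_le_tsum_measure_exceed {Ω : Type*} [MeasurableSpace Ω]
    {μ : Measure Ω} {X : ℕ → Ω → ℝ} (hX0 : Measurable (X 0))
    (hiid : ∀ n, IdentDistrib (X n) (X 0) μ μ) {q : ℝ} (hq0 : 0 < q) (hq2 : q ≤ 2)
    (c : ℝ) (M : ℕ) :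
    ∫⁻ ω in {ω | ((8 * M : ℕ) : ℝ) < |X 0 ω - c| ^ q}, ENNReal.ofReal (|X 0 ω - c| ^ q) ∂μ ≤
      ENNReal.ofReal 8 *
        ∑' k : ℕ, μ (X (M + k) ⁻¹' {x | 2 * ((M + k : ℕ) : ℝ) ^ (1 / q) < |x - c|}) := by
  have h := setLIntegral_ofReal_le_mul_tsum_measure_lt (μ := μ)
    (f := fun ω => |X 0 ω - c| ^ q) (by fun_prop) (by norm_num : (0 : ℝ) < 4) M
  norm_num only [Nat.cast_mul, Nat.cast_ofNat] at h ⊢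
  refine h.trans (mul_le_mul_right (ENNReal.tsum_le_tsum fun k => ?_) _)
  rw [(hiid (M + k)).measure_mem_eq (measurableSet_lt measurable_const (by fun_prop))]
  refine measure_mono fun ω hω => ?_
  exact two_mul_rpow_one_div_lt_of_four_mul_lt_rpow hq0 hq2 (by positivity) (abs_nonneg _)
    (by push_cast; exact hω)

theorem stmt15_general {Ω : Type*} [MeasurableSpace Ω] (Ps : Set (Measure Ω))
    (X : ℕ → Ω → ℝ) (hmeas : ∀ n, Measurable (X n))
    (hindep : ∀ P ∈ Ps, iIndepFun X P)
    (hiid : ∀ P ∈ Ps, ∀ n, IdentDistrib (X n) (X 0) P P)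
    (q : ℝ) (hq0 : 0 < q) (hq2 : q < 2)
    (hnUI : ∃ ε : ℝ, 0 < ε ∧ ∀ m : ℕ, ∃ P ∈ Ps,
      ENNReal.ofReal ε ≤
        ∫⁻ ω in {ω | (m : ℝ) <
            |X 0 ω - (if 1 ≤ q then ∫ x, X 0 x ∂P else 0)| ^ q},
          ENNReal.ofReal (|X 0 ω - (if 1 ≤ q then ∫ x, X 0 x ∂P else 0)| ^ q) ∂P) :
    ∃ ε : ℝ, 0 < ε ∧ ∀ m : ℕ, ∃ P ∈ Ps,
      ENNReal.ofReal ε ≤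
        P {ω | ∃ k ≥ m, (1 : ℝ) / 2 ≤
          |((k : ℝ) ^ (1 / q))⁻¹ *
            ∑ i ∈ Finset.Icc 1 k, (X i ω - (if 1 ≤ q then ∫ x, X 0 x ∂P else 0))|} := by
  obtain ⟨ε, hε, hUI⟩ := hnUI
  refine ⟨1 - Real.exp (-(ε / 16)), sub_pos.mpr (Real.exp_lt_one_iff.mpr (by linarith)),
    fun m => ?_⟩
  obtain ⟨P, hP, htail⟩ := hUI (8 * (m + 1))
  refine ⟨P, hP, ?_⟩
  set c := if 1 ≤ q then ∫ x, X 0 x ∂P else 0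
  have hexceed : ENNReal.ofReal (ε / 16) < ∑' k, P (X (m + 1 + k) ⁻¹'
      {x | 2 * ((m + 1 + k : ℕ) : ℝ) ^ (1 / q) < |x - c|}) := by
    calc ENNReal.ofReal (ε / 16) < ENNReal.ofReal ε / ENNReal.ofReal 8 := by
          rw [← ENNReal.ofReal_div_of_pos (by norm_num)]
          exact (ENNReal.ofReal_lt_ofReal_iff (by positivity)).mpr (by linarith)
      _ ≤ _ := ENNReal.div_le_of_le_mul' <| htail.trans <|
          lintegral_tail_rpow_le_tsum_measure_exceed (hmeas 0) (hiid P hP) hq0 hq2.le c (m + 1)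
  obtain ⟨t, ht⟩ := ((hindep P hP).precomp (add_right_injective (m + 1))
    ).exists_finset_ofReal_one_sub_exp_neg_le_measure_biUnion (fun _ => hmeas _)
    (fun _ => measurableSet_lt measurable_const (by fun_prop)) hexceed
  refine ht.trans (measure_mono (Set.iUnion₂_subset fun k _ ω hω => ?_))
  obtain ⟨n, hn, hn1⟩ := exists_one_le_abs_rpow_inv_mul_sum_Icc
    (x := fun i => X i ω - c) (by positivity) (by omega) hω
  exact ⟨n, by omega, by linarith⟩

/-- Necessity of Ps-uniform integrability for the Ps-uniform Marcinkiewicz–Zygmund strong law: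
with `μ(P;q) = E_P X` for `1 ≤ q < 2` and `μ(P;q) = 0` for `0 < q < 1`, if the q-th
moment is not Ps-uniformly integrable, then the strong law at rate `n^{1/q−1}` fails (with
constant `1/2`). -/
theorem stmt15 {Ω : Type*} [MeasurableSpace Ω] (Ps : Set (Measure Ω))
    (hPs : ∀ P ∈ Ps, IsProbabilityMeasure P)
    (X : ℕ → Ω → ℝ) (hmeas : ∀ n, Measurable (X n))
    (hindep : ∀ P ∈ Ps, iIndepFun X P)
    (hiid : ∀ P ∈ Ps, ∀ n, IdentDistrib (X n) (X 0) P P)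
    (q : ℝ) (hq0 : 0 < q) (hq2 : q < 2)
    (hint : 1 ≤ q → ∀ P ∈ Ps, Integrable (X 0) P)
    (hnUI : ∃ ε : ℝ, 0 < ε ∧ ∀ m : ℕ, ∃ P ∈ Ps,
      ENNReal.ofReal ε ≤
        ∫⁻ ω in {ω | (m : ℝ) <
            |X 0 ω - (if 1 ≤ q then ∫ x, X 0 x ∂P else 0)| ^ q},
          ENNReal.ofReal (|X 0 ω - (if 1 ≤ q then ∫ x, X 0 x ∂P else 0)| ^ q) ∂P) :
    ∃ ε : ℝ, 0 < ε ∧ ∀ m : ℕ, ∃ P ∈ Ps,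
      ENNReal.ofReal ε ≤
        P {ω | ∃ k ≥ m, (1 : ℝ) / 2 ≤
          |((k : ℝ) ^ (1 / q))⁻¹ *
            ∑ i ∈ Finset.Icc 1 k, (X i ω - (if 1 ≤ q then ∫ x, X 0 x ∂P else 0))|} :=
  stmt15_general Ps X hmeas hindep hiid q hq0 hq2 hnUI
end
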